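/- arXiv:1304.3587 — 7 statements merged into one kernel-verified Lean document; each statement's English description precedes it below -/
import Mathlib

section
/- Let (Y,ν) be a probability space, S : Y → Y an invertible measure-preserving ergodic transformation, and φ : Y → {0,1} measurable; for m ≥ 0 set φ^(m)(y) = φ(y) + φ(Sy) + … + φ(S^{m-1}y). Assume: (a) S has discrete spectrum, i.e. the closed linear span in L²(ν) of the unimodular eigenfunctions {η ∈ L²(ν) : |η| = 1 a.e. and η∘S = α·η a.e. for some α ∈ ℂ} equals L²(ν); (b) (q_n) is a strictly increasing sequence of natural numbers such that f∘S^{q_n} → f in L²(ν) for every f ∈ L²(ν); (c) ∫_Y (−1)^{φ^(q_n)} dν → c for some real c with |c| ≤ 1. Then for all ξ, η ∈ L²(ν), ∫_Y (−1)^{φ^(q_n)(y)} ξ(S^{q_n}y) \overline{η(y)} dν(y) → c·∫_Y ξ \overline{η} dν as n → ∞. -/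
/-!
Write `M_n` for multiplication by `(-1)^{φ^{(q_n)}}` and `U` for the Koopman operator of `S`, so
that the integral in question is `⟪η, M_n U^{q_n} ξ⟫`. Rigidity gives `U^{q_n} ξ → ξ` and
`‖M_n‖ ≤ 1`, so it suffices to show `M_n → c · id` weakly; as the `M_n` are uniformly bounded, it
is enough to test this on the unimodular eigenfunctions, whose span is dense. For two of them `ψ = f · conj g`
is again a bounded eigenfunction, with eigenvalue `γ` say, and one needs
`∫ (-1)^{φ^{(q_n)}} ψ → c ∫ ψ`. If `γ = 1`, then `ψ` is constant by ergodicity and this is the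
hypothesis on `∫ (-1)^{φ^{(q_n)}}`. Otherwise `∫ ψ = 0`, and the cocycle identity
`φ^{(m)} ∘ S + φ = φ^{(m)} + φ ∘ S^m` together with the invariance of `ν` gives
`(1 - γ) ∫ (-1)^{φ^{(m)}} ψ = γ ∫ (-1)^{φ + φ^{(m)}} ψ ((-1)^{φ ∘ S^m} - (-1)^φ)`, which tends to
`0` along `q_n` by rigidity of the single function `(-1)^φ`.
-/

open MeasureTheory Filter Topology
open scoped NNReal ENNReal ComplexConjugate InnerProductSpace

section DenseSpan

variable {𝕜 E F ι : Type*} [NontriviallyNormedField 𝕜] [NormedAddCommGroup E] [NormedSpace 𝕜 E]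
  [NormedAddCommGroup F] [NormedSpace 𝕜 F] {l : Filter ι}

theorem ContinuousLinearMap.tendsto_apply_of_dense_span {L : ι → E →L[𝕜] F} {C : ℝ}
    (hL : ∀ i, ‖L i‖ ≤ C) (L₀ : E →L[𝕜] F) {D : Set E}
    (hD : (Submodule.span 𝕜 D).topologicalClosure = ⊤)
    (h : ∀ x ∈ D, Tendsto (fun i => L i x) l (𝓝 (L₀ x))) (x : E) :
    Tendsto (fun i => L i x) l (𝓝 (L₀ x)) := by
  let G : Submodule 𝕜 E :=
    { carrier := {x | Tendsto (fun i => L i x) l (𝓝 (L₀ x))}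
      add_mem' := fun hx hy => by simpa using hx.add hy
      zero_mem' := by simpa using tendsto_const_nhds
      smul_mem' := fun a _ hx => by simpa using hx.const_smul a }
  have hLip : ∀ i, LipschitzWith C.toNNReal (L i) := fun i =>
    (L i).lipschitz.weaken (by simpa [← NNReal.coe_le_coe] using (hL i).trans C.le_coe_toNNReal)
  have hclosed : IsClosed (G : Set E) :=
    (LipschitzWith.uniformEquicontinuous _ _ hLip).equicontinuous.isClosed_setOfPred_tendsto
      L₀.continuous
  have hG : (⊤ : Submodule 𝕜 E) ≤ G :=
    hD ▸ Submodule.topologicalClosure_minimal _ (Submodule.span_le.mpr h) hclosed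
  exact hG trivial

end DenseSpan

section WeakLimit

variable {𝕜 H ι : Type*} [RCLike 𝕜] [NormedAddCommGroup H] [InnerProductSpace 𝕜 H]
  {l : Filter ι} {T : ι → H →L[𝕜] H} {C : ℝ}

theorem tendsto_inner_of_dense_span (hT : ∀ i, ‖T i‖ ≤ C) (c : 𝕜) {D : Set H}
    (hD : (Submodule.span 𝕜 D).topologicalClosure = ⊤)
    (h : ∀ x ∈ D, ∀ y ∈ D, Tendsto (fun i => ⟪y, T i x⟫_𝕜) l (𝓝 (c * ⟪y, x⟫_𝕜))) (x y : H) :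
    Tendsto (fun i => ⟪y, T i x⟫_𝕜) l (𝓝 (c * ⟪y, x⟫_𝕜)) := by
  have hleft : ∀ y ∈ D, Tendsto (fun i => ⟪y, T i x⟫_𝕜) l (𝓝 (c * ⟪y, x⟫_𝕜)) := by
    intro y hy
    have hbound : ∀ i, ‖(innerSL 𝕜 y).comp (T i)‖ ≤ ‖y‖ * C := fun i =>
      ((innerSL 𝕜 y).opNorm_comp_le _).trans
        (by rw [innerSL_apply_norm]; exact mul_le_mul_of_nonneg_left (hT i) (norm_nonneg y))
    simpa using ContinuousLinearMap.tendsto_apply_of_dense_span hbound (c • innerSL 𝕜 y) hD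
      (by simpa using fun x hx => h x hx y hy) x
  -- `y ↦ ⟪y, T i x⟫` is conjugate-linear, so pass to the linear functionals `⟪T i x, ·⟫`.
  have hbound : ∀ i, ‖innerSL 𝕜 (T i x)‖ ≤ C * ‖x‖ := fun i => by
    rw [innerSL_apply_norm]
    exact (T i).le_of_opNorm_le (hT i) x
  have hconj := ContinuousLinearMap.tendsto_apply_of_dense_span hbound (innerSL 𝕜 (c • x)) hD
    (fun y hy => by
      simpa [Function.comp_def, inner_smul_left] using
        (RCLike.continuous_conj.tendsto _).comp (hleft y hy)) y
  simpa [Function.comp_def, inner_smul_left] using (RCLike.continuous_conj.tendsto _).comp hconj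

theorem tendsto_inner_apply_of_tendsto (hT : ∀ i, ‖T i‖ ≤ C) {x : ι → H} {x₀ : H}
    (hx : Tendsto x l (𝓝 x₀)) {y : H} {a : 𝕜} (h : Tendsto (fun i => ⟪y, T i x₀⟫_𝕜) l (𝓝 a)) :
    Tendsto (fun i => ⟪y, T i (x i)⟫_𝕜) l (𝓝 a) := by
  have hbound : ∀ i, ‖⟪y, T i (x i - x₀)⟫_𝕜‖ ≤ ‖y‖ * C * ‖x i - x₀‖ := fun i =>
    (norm_inner_le_norm _ _).trans <| by
      rw [mul_assoc]
      exact mul_le_mul_of_nonneg_left ((T i).le_of_opNorm_le (hT i) _) (norm_nonneg y)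
  have hsmall := squeeze_zero_norm hbound <| by
    simpa using (tendsto_iff_norm_sub_tendsto_zero.mp hx).const_mul (‖y‖ * C)
  simpa [inner_sub_right] using hsmall.add h

end WeakLimit

section MultiplicationOperator

variable {Y 𝕜 : Type*} [MeasurableSpace Y] {μ : Measure Y} [RCLike 𝕜]

noncomputable def multiplicationOperator (w : Lp 𝕜 ∞ μ) : Lp 𝕜 2 μ →L[𝕜] Lp 𝕜 2 μ :=
  (ContinuousLinearMap.mul 𝕜 𝕜).holderL μ ∞ 2 2 w

lemma norm_multiplicationOperator_le (w : Lp 𝕜 ∞ μ) : ‖multiplicationOperator w‖ ≤ ‖w‖ :=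
  calc ‖multiplicationOperator w‖
      ≤ ‖(ContinuousLinearMap.mul 𝕜 𝕜).holderL μ ∞ 2 2‖ * ‖w‖ := ContinuousLinearMap.le_opNorm _ _
    _ ≤ 1 * ‖w‖ := by
      gcongr
      exact (ContinuousLinearMap.norm_holderL_le (ContinuousLinearMap.mul 𝕜 𝕜)).trans
        (ContinuousLinearMap.opNorm_mul_le 𝕜 𝕜)
    _ = ‖w‖ := one_mul _

lemma inner_multiplicationOperator (w : Lp 𝕜 ∞ μ) (f g : Lp 𝕜 2 μ) :
    ⟪g, multiplicationOperator w f⟫_𝕜 = ∫ y, w y * f y * conj (g y) ∂μ := by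
  rw [L2.inner_def]
  refine integral_congr_ae
    (((ContinuousLinearMap.mul 𝕜 𝕜).coeFn_holder (r := 2) w f).mono fun y hy => ?_)
  simp only [multiplicationOperator, ContinuousLinearMap.holderL_apply_apply, hy,
    RCLike.inner_apply, ContinuousLinearMap.mul_apply']

end MultiplicationOperator

section Rigidity

variable {Y E ι : Type*} [MeasurableSpace Y] {μ : Measure Y} [NormedAddCommGroup E] {l : Filter ι}
  {p : ℝ≥0∞}

lemma tendsto_eLpNorm_comp_sub_of_memLp {T : ι → Y → Y} (hT : ∀ i, MeasurePreserving (T i) μ μ)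
    (hrig : ∀ f : Lp E p μ, Tendsto (fun i => eLpNorm (fun y => f (T i y) - f y) p μ) l (𝓝 0))
    {g : Y → E} (hg : MemLp g p μ) :
    Tendsto (fun i => eLpNorm (fun y => g (T i y) - g y) p μ) l (𝓝 0) := by
  refine (hrig (hg.toLp g)).congr fun i => eLpNorm_congr_ae ?_
  filter_upwards [hg.coeFn_toLp, (hT i).quasiMeasurePreserving.ae_eq_comp hg.coeFn_toLp]
    with y h₁ h₂
  simp only [Function.comp_apply] at h₂
  rw [h₁, h₂]

lemma tendsto_integral_norm_of_tendsto_eLpNorm [IsProbabilityMeasure μ] (hp : 1 ≤ p)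
    {F : ι → Y → E} (hF : ∀ i, AEStronglyMeasurable (F i) μ)
    (h : Tendsto (fun i => eLpNorm (F i) p μ) l (𝓝 0)) :
    Tendsto (fun i => ∫ y, ‖F i y‖ ∂μ) l (𝓝 0) := by
  have h₁ : Tendsto (fun i => eLpNorm (F i) 1 μ) l (𝓝 0) :=
    tendsto_of_tendsto_of_tendsto_of_le_of_le tendsto_const_nhds h (fun _ => zero_le)
      fun i => eLpNorm_le_eLpNorm_of_exponent_le hp (hF i)
  simpa [integral_norm_eq_lintegral_enorm (hF _), ← eLpNorm_one_eq_lintegral_enorm,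
    Function.comp_def] using (ENNReal.tendsto_toReal ENNReal.zero_ne_top).comp h₁

lemma tendsto_compMeasurePreserving [Fact (1 ≤ p)] {T : ι → Y → Y}
    (hT : ∀ i, MeasurePreserving (T i) μ μ)
    (f : Lp E p μ) (h : Tendsto (fun i => eLpNorm (fun y => f (T i y) - f y) p μ) l (𝓝 0)) :
    Tendsto (fun i => Lp.compMeasurePreserving (T i) (hT i) f) l (𝓝 f) := by
  have hnorm : ∀ i, ‖Lp.compMeasurePreserving (T i) (hT i) f - f‖ =
      (eLpNorm (fun y => f (T i y) - f y) p μ).toReal := fun i => by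
    rw [Lp.norm_def]
    congr 1
    refine eLpNorm_congr_ae ?_
    filter_upwards [Lp.coeFn_sub (Lp.compMeasurePreserving (T i) (hT i) f) f,
      Lp.coeFn_compMeasurePreserving f (hT i)] with y h₁ h₂
    rw [h₁, Pi.sub_apply, h₂, Function.comp_apply]
  rw [tendsto_iff_norm_sub_tendsto_zero]
  simpa [hnorm, Function.comp_def] using (ENNReal.tendsto_toReal ENNReal.zero_ne_top).comp h

end Rigidity

section BirkhoffSign

variable {Y : Type*} {S : Y → Y} {φ : Y → ℕ}

def birkhoffSign (S : Y → Y) (φ : Y → ℕ) (m : ℕ) (y : Y) : ℂ :=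
  (-1) ^ birkhoffSum S φ m y

@[simp]
lemma norm_birkhoffSign (m : ℕ) (y : Y) : ‖birkhoffSign S φ m y‖ = 1 := by
  simp [birkhoffSign]

lemma birkhoffSign_cocycle (S : Y → Y) (φ : Y → ℕ) (m : ℕ) (y : Y) :
    birkhoffSign S φ m (S y) = (-1) ^ φ y * birkhoffSign S φ m y * (-1) ^ φ (S^[m] y) := by
  have hsum := (birkhoffSum_succ' S φ m y).symm.trans (birkhoffSum_succ S φ m y)
  have hsq : ((-1 : ℂ) ^ φ y) ^ 2 = 1 := by rw [← pow_mul, mul_comm, pow_mul]; norm_num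
  simp only [birkhoffSign]
  linear_combination (-1 : ℂ) ^ φ y * congrArg ((-1 : ℂ) ^ ·) hsum
    - (-1 : ℂ) ^ birkhoffSum S φ m (S y) * hsq

variable [MeasurableSpace Y] {ν : Measure Y}

lemma integral_birkhoffSign (S : Y → Y) (φ : Y → ℕ) (m : ℕ) :
    ∫ y, birkhoffSign S φ m y ∂ν = ((∫ y, (-1 : ℝ) ^ birkhoffSum S φ m y ∂ν : ℝ) : ℂ) := by
  rw [← integral_complex_ofReal]
  push_cast
  rfl

lemma measurable_birkhoffSign (hS : Measurable S) (hφ : Measurable φ) (m : ℕ) :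
    Measurable (birkhoffSign S φ m) :=
  measurable_from_top.comp <| Finset.measurable_sum _ fun i _ => hφ.comp (hS.iterate i)

theorem tendsto_integral_birkhoffSign_mul_of_invariant [IsProbabilityMeasure ν] {q : ℕ → ℕ}
    {c : ℂ} (hS : Ergodic S ν)
    (hc : Tendsto (fun n => ∫ y, birkhoffSign S φ (q n) y ∂ν) atTop (𝓝 c))
    {ψ : Y → ℂ} (hψm : AEStronglyMeasurable ψ ν) (hψ : (fun y => ψ (S y)) =ᵐ[ν] ψ) :
    Tendsto (fun n => ∫ y, birkhoffSign S φ (q n) y * ψ y ∂ν) atTop (𝓝 (c * ∫ y, ψ y ∂ν)) := by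
  obtain ⟨k, hk⟩ := hS.ae_eq_const_of_ae_eq_comp_ae hψm hψ
  have hconst : ∀ m, ∫ y, birkhoffSign S φ m y * ψ y ∂ν = (∫ y, birkhoffSign S φ m y ∂ν) * k :=
    fun m => by
      rw [← integral_mul_const]
      exact integral_congr_ae (hk.mono fun y hy => by simp [hy])
  simpa [hconst, integral_congr_ae hk] using hc.mul_const k

theorem one_sub_mul_integral_birkhoffSign_mul [IsFiniteMeasure ν] (hS : MeasurePreserving S ν ν)
    (hφ : Measurable φ) (m : ℕ) {ψ : Y → ℂ} {C : ℝ} (hψm : AEStronglyMeasurable ψ ν)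
    (hψC : ∀ᵐ y ∂ν, ‖ψ y‖ ≤ C) {γ : ℂ} (hψ : (fun y => ψ (S y)) =ᵐ[ν] fun y => γ * ψ y) :
    (1 - γ) * ∫ y, birkhoffSign S φ m y * ψ y ∂ν =
      γ * ∫ y, (-1) ^ φ y * birkhoffSign S φ m y * ψ y * ((-1) ^ φ (S^[m] y) - (-1) ^ φ y) ∂ν := by
  have hu : Measurable fun y => (-1 : ℂ) ^ φ y := measurable_from_top.comp hφ
  have hW := measurable_birkhoffSign hS.measurable hφ m
  have hWψ : AEStronglyMeasurable (fun y => birkhoffSign S φ m y * ψ y) ν :=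
    hW.aestronglyMeasurable.mul hψm
  have hint₁ : Integrable (fun y => birkhoffSign S φ m y * ψ y) ν :=
    .of_bound hWψ C (hψC.mono fun y hy => by simpa using hy)
  have hint₂ : Integrable
      (fun y => (-1) ^ φ y * birkhoffSign S φ m y * (-1) ^ φ (S^[m] y) * ψ y) ν :=
    .of_bound (((hu.mul hW).mul (hu.comp (hS.measurable.iterate m))).aestronglyMeasurable.mul hψm)
      C (hψC.mono fun y hy => by simpa using hy)
  have hcomp : ∫ y, birkhoffSign S φ m y * ψ y ∂ν =
      γ * ∫ y, (-1) ^ φ y * birkhoffSign S φ m y * (-1) ^ φ (S^[m] y) * ψ y ∂ν := by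
    rw [← hS.map_eq, integral_map (f := fun y => birkhoffSign S φ m y * ψ y)
      hS.measurable.aemeasurable (by rwa [hS.map_eq]), hS.map_eq, ← integral_const_mul]
    refine integral_congr_ae (hψ.mono fun y hy => ?_)
    simp only at hy ⊢
    rw [birkhoffSign_cocycle, hy]
    ring
  have hdiff : ∫ y, (-1) ^ φ y * birkhoffSign S φ m y * (-1) ^ φ (S^[m] y) * ψ y ∂ν -
      ∫ y, birkhoffSign S φ m y * ψ y ∂ν =
      ∫ y, (-1) ^ φ y * birkhoffSign S φ m y * ψ y * ((-1) ^ φ (S^[m] y) - (-1) ^ φ y) ∂ν := by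
    rw [← integral_sub hint₂ hint₁]
    refine integral_congr_ae (.of_forall fun y => ?_)
    have hsq : ((-1 : ℂ) ^ φ y) ^ 2 = 1 := by rw [← pow_mul, mul_comm, pow_mul]; norm_num
    linear_combination birkhoffSign S φ m y * ψ y * hsq
  linear_combination hcomp + γ * hdiff

theorem tendsto_integral_birkhoffSign_mul_of_eigenvalue_ne_one [IsFiniteMeasure ν] {q : ℕ → ℕ}
    (hS : MeasurePreserving S ν ν) (hφ : Measurable φ)
    (hrig : Tendsto (fun n => ∫ y, ‖(-1 : ℂ) ^ φ (S^[q n] y) - (-1) ^ φ y‖ ∂ν) atTop (𝓝 0))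
    {ψ : Y → ℂ} {C : ℝ} (hψm : AEStronglyMeasurable ψ ν) (hψC : ∀ᵐ y ∂ν, ‖ψ y‖ ≤ C) {γ : ℂ}
    (hψ : (fun y => ψ (S y)) =ᵐ[ν] fun y => γ * ψ y) (hγ : γ ≠ 1) :
    Tendsto (fun n => ∫ y, birkhoffSign S φ (q n) y * ψ y ∂ν) atTop (𝓝 0) := by
  have hu : Measurable fun y => (-1 : ℂ) ^ φ y := measurable_from_top.comp hφ
  have hbound : ∀ m, ‖∫ y, (-1) ^ φ y * birkhoffSign S φ m y * ψ y *
      ((-1) ^ φ (S^[m] y) - (-1) ^ φ y) ∂ν‖ ≤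
      C * ∫ y, ‖(-1 : ℂ) ^ φ (S^[m] y) - (-1) ^ φ y‖ ∂ν := by
    intro m
    have hint : Integrable (fun y => ‖(-1 : ℂ) ^ φ (S^[m] y) - (-1) ^ φ y‖) ν :=
      .of_bound ((hu.comp (hS.measurable.iterate m)).sub hu).norm.aestronglyMeasurable 2
        (.of_forall fun y => by simpa using (norm_sub_le _ _).trans (by simp; norm_num))
    rw [← integral_const_mul]
    refine norm_integral_le_of_norm_le (hint.const_mul C) (hψC.mono fun y hy => ?_)
    simpa using mul_le_mul_of_nonneg_right hy (norm_nonneg _)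
  have hsmall := squeeze_zero_norm (fun n => hbound (q n)) (by simpa using hrig.const_mul C)
  have hγ' : 1 - γ ≠ 0 := sub_ne_zero.mpr hγ.symm
  refine ((hsmall.const_mul γ).div_const (1 - γ)).congr (fun n => ?_) |>.trans (by simp)
  rw [div_eq_iff hγ', mul_comm _ (1 - γ), one_sub_mul_integral_birkhoffSign_mul hS hφ _ hψm hψC hψ]

theorem tendsto_integral_birkhoffSign_mul_eigenfunction [IsProbabilityMeasure ν] {q : ℕ → ℕ}
    {c : ℂ} (hS : Ergodic S ν) (hφ : Measurable φ)
    (hrig : Tendsto (fun n => ∫ y, ‖(-1 : ℂ) ^ φ (S^[q n] y) - (-1) ^ φ y‖ ∂ν) atTop (𝓝 0))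
    (hc : Tendsto (fun n => ∫ y, birkhoffSign S φ (q n) y ∂ν) atTop (𝓝 c))
    {ψ : Y → ℂ} {C : ℝ} (hψm : AEStronglyMeasurable ψ ν) (hψC : ∀ᵐ y ∂ν, ‖ψ y‖ ≤ C) {γ : ℂ}
    (hψ : (fun y => ψ (S y)) =ᵐ[ν] fun y => γ * ψ y) :
    Tendsto (fun n => ∫ y, birkhoffSign S φ (q n) y * ψ y ∂ν) atTop (𝓝 (c * ∫ y, ψ y ∂ν)) := by
  by_cases hγ : γ = 1
  · subst hγ
    exact tendsto_integral_birkhoffSign_mul_of_invariant hS hc hψm (by simpa using hψ)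
  · -- the case `m = 0` of `one_sub_mul_integral_birkhoffSign_mul` reads `(1 - γ) ∫ ψ = 0`
    have h₀ := one_sub_mul_integral_birkhoffSign_mul hS.toMeasurePreserving hφ 0 hψm hψC hψ
    simp only [birkhoffSign, birkhoffSum_zero', Pi.zero_apply, pow_zero, one_mul, mul_one,
      Function.iterate_zero, id_eq, sub_self, mul_zero, integral_zero, mul_eq_zero, sub_eq_zero,
      Ne.symm hγ, false_or] at h₀
    simpa [h₀] using tendsto_integral_birkhoffSign_mul_of_eigenvalue_ne_one
      hS.toMeasurePreserving hφ hrig hψm hψC hψ hγ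

end BirkhoffSign

section SignOperator

variable {Y : Type*} [MeasurableSpace Y] {ν : Measure Y} {S : Y → Y} {φ : Y → ℕ}

def unimodularEigenfunctions (S : Y → Y) (ν : Measure Y) : Set (Lp ℂ 2 ν) :=
  {η | (∀ᵐ y ∂ν, ‖η y‖ = 1) ∧ ∃ α : ℂ, (fun y => η (S y)) =ᵐ[ν] fun y => α * η y}

lemma memLp_top_birkhoffSign (hS : Measurable S) (hφ : Measurable φ) (m : ℕ) :
    MemLp (birkhoffSign S φ m) ∞ ν :=
  memLp_top_of_bound (measurable_birkhoffSign hS hφ m).aestronglyMeasurable 1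
    (.of_forall fun y => (norm_birkhoffSign m y).le)

noncomputable def birkhoffSignOperator (hS : Measurable S) (hφ : Measurable φ) (m : ℕ) :
    Lp ℂ 2 ν →L[ℂ] Lp ℂ 2 ν :=
  multiplicationOperator ((memLp_top_birkhoffSign hS hφ m).toLp _)

lemma norm_birkhoffSignOperator_le [IsFiniteMeasure ν] (hS : Measurable S) (hφ : Measurable φ)
    (m : ℕ) : ‖birkhoffSignOperator (ν := ν) hS hφ m‖ ≤ 1 := by
  refine (norm_multiplicationOperator_le _).trans <| (Lp.norm_le_of_ae_bound zero_le_one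
    (((memLp_top_birkhoffSign hS hφ m).coeFn_toLp).mono fun y hy => ?_)).trans (by simp)
  rw [hy, norm_birkhoffSign]

lemma inner_birkhoffSignOperator (hS : Measurable S) (hφ : Measurable φ) (m : ℕ)
    (f g : Lp ℂ 2 ν) :
    ⟪g, birkhoffSignOperator hS hφ m f⟫_ℂ = ∫ y, birkhoffSign S φ m y * f y * conj (g y) ∂ν := by
  rw [birkhoffSignOperator, inner_multiplicationOperator]
  exact integral_congr_ae (((memLp_top_birkhoffSign hS hφ m).coeFn_toLp).mono fun y hy => by
    simp only [hy])

theorem tendsto_inner_birkhoffSignOperator [IsProbabilityMeasure ν] {q : ℕ → ℕ} {c : ℂ}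
    (hS : Ergodic S ν) (hφ : Measurable φ)
    (hrig : Tendsto (fun n => ∫ y, ‖(-1 : ℂ) ^ φ (S^[q n] y) - (-1) ^ φ y‖ ∂ν) atTop (𝓝 0))
    (hc : Tendsto (fun n => ∫ y, birkhoffSign S φ (q n) y ∂ν) atTop (𝓝 c))
    (hspan : (Submodule.span ℂ (unimodularEigenfunctions S ν)).topologicalClosure = ⊤)
    (f g : Lp ℂ 2 ν) :
    Tendsto (fun n => ⟪g, birkhoffSignOperator hS.measurable hφ (q n) f⟫_ℂ) atTop
      (𝓝 (c * ⟪g, f⟫_ℂ)) := by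
  refine tendsto_inner_of_dense_span (fun n => norm_birkhoffSignOperator_le _ _ _) c hspan ?_ f g
  rintro f ⟨hf, α, hfα⟩ g ⟨hg, β, hgβ⟩
  have hψm : AEStronglyMeasurable (fun y => f y * conj (g y)) ν :=
    (Lp.aestronglyMeasurable f).mul (Lp.aestronglyMeasurable g).star
  have hψC : ∀ᵐ y ∂ν, ‖f y * conj (g y)‖ ≤ 1 := by
    filter_upwards [hf, hg] with y hy₁ hy₂
    simp [hy₁, hy₂]
  have hψ : (fun y => f (S y) * conj (g (S y))) =ᵐ[ν]
      fun y => α * conj β * (f y * conj (g y)) := by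
    filter_upwards [hfα, hgβ] with y hy₁ hy₂
    rw [hy₁, hy₂, map_mul]
    ring
  simp only [fun n => inner_birkhoffSignOperator hS.measurable hφ (q n) f g, L2.inner_def,
    RCLike.inner_apply, mul_assoc]
  exact tendsto_integral_birkhoffSign_mul_eigenfunction hS hφ hrig hc hψm hψC hψ

end SignOperator

theorem weighted_operator_weak_limit_general
    {Y : Type*} [MeasurableSpace Y] (ν : Measure Y) [IsProbabilityMeasure ν]
    (S : Y ≃ᵐ Y) (hS : Ergodic S ν)
    (φ : Y → ℕ) (hφm : Measurable φ)
    (hspan : (Submodule.span ℂ {η : Lp ℂ 2 ν |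
        (∀ᵐ y ∂ν, ‖η y‖ = 1) ∧
        ∃ α : ℂ, (fun y => η (S y)) =ᵐ[ν] fun y => α * η y}).topologicalClosure = ⊤)
    (q : ℕ → ℕ)
    (hqrig : ∀ f : Lp ℂ 2 ν,
      Tendsto (fun n : ℕ => eLpNorm (fun y => f ((⇑S)^[q n] y) - f y) 2 ν)
        atTop (nhds 0))
    (c : ℝ)
    (hcc : Tendsto
      (fun n : ℕ => ∫ y, (-1 : ℝ) ^ (∑ i ∈ Finset.range (q n), φ ((⇑S)^[i] y)) ∂ν)
      atTop (nhds c)) :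
    ∀ ξ η : Lp ℂ 2 ν,
      Tendsto
        (fun n : ℕ => ∫ y, (-1 : ℂ) ^ (∑ i ∈ Finset.range (q n), φ ((⇑S)^[i] y)) *
            ξ ((⇑S)^[q n] y) * (starRingEnd ℂ) (η y) ∂ν)
        atTop
        (nhds ((c : ℂ) * ∫ y, ξ y * (starRingEnd ℂ) (η y) ∂ν)) := by
  intro ξ η
  have hSmp : MeasurePreserving S ν ν := hS.toMeasurePreserving
  have hu : Measurable fun y => (-1 : ℂ) ^ φ y := measurable_from_top.comp hφm
  have hrigL2 := tendsto_eLpNorm_comp_sub_of_memLp (fun n => hSmp.iterate (q n)) hqrig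
    (MemLp.of_bound hu.aestronglyMeasurable 1 (.of_forall fun y => by simp))
  have hrig : Tendsto (fun n => ∫ y, ‖(-1 : ℂ) ^ φ ((⇑S)^[q n] y) - (-1) ^ φ y‖ ∂ν)
      atTop (𝓝 0) :=
    tendsto_integral_norm_of_tendsto_eLpNorm (by norm_num)
      (fun n => ((hu.comp (S.measurable.iterate _)).sub hu).aestronglyMeasurable) hrigL2
  have hc : Tendsto (fun n => ∫ y, birkhoffSign (⇑S) φ (q n) y ∂ν) atTop (𝓝 (c : ℂ)) := by
    simpa [integral_birkhoffSign, birkhoffSum, Function.comp_def] using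
      (Complex.continuous_ofReal.tendsto c).comp hcc
  have hshift := tendsto_compMeasurePreserving (fun n => hSmp.iterate (q n)) ξ (hqrig ξ)
  have hlim := tendsto_inner_apply_of_tendsto (fun n => norm_birkhoffSignOperator_le _ _ _)
    hshift (tendsto_inner_birkhoffSignOperator hS hφm hrig hc hspan ξ η)
  rw [show ∫ y, ξ y * conj (η y) ∂ν = ⟪η, ξ⟫_ℂ by simp [L2.inner_def]]
  refine hlim.congr fun n => ?_
  rw [inner_birkhoffSignOperator]
  exact integral_congr_ae ((Lp.coeFn_compMeasurePreserving ξ (hSmp.iterate (q n))).mono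
    fun y hy => by simp only [hy, Function.comp_apply]; rfl)

/-- Let `(Y,ν)` be a probability space, `S` an invertible measure-preserving
ergodic transformation with discrete spectrum (the closed span of the unimodular
eigenfunctions is all of `L²(ν)`), and `φ : Y → {0,1}` measurable, with Birkhoff sums
`φ^{(m)}(y) = Σ_{i<m} φ(S^i y)`. If `(q_n)` is a strictly increasing sequence of naturals
with `f ∘ S^{q_n} → f` in `L²(ν)` for every `f ∈ L²(ν)`, and
`∫ (−1)^{φ^{(q_n)}} dν → c` with `|c| ≤ 1`, then for all `ξ, η ∈ L²(ν)`,
`∫ (−1)^{φ^{(q_n)}(y)} ξ(S^{q_n} y) conj(η(y)) dν(y) → c·∫ ξ conj(η) dν`. -/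
theorem weighted_operator_weak_limit
    {Y : Type*} [MeasurableSpace Y] (ν : Measure Y) [IsProbabilityMeasure ν]
    (S : Y ≃ᵐ Y) (hS : Ergodic S ν)
    (φ : Y → ℕ) (hφm : Measurable φ) (hφ01 : ∀ y, φ y ≤ 1)
    (hspan : (Submodule.span ℂ {η : Lp ℂ 2 ν |
        (∀ᵐ y ∂ν, ‖η y‖ = 1) ∧
        ∃ α : ℂ, (fun y => η (S y)) =ᵐ[ν] fun y => α * η y}).topologicalClosure = ⊤)
    (q : ℕ → ℕ) (hq : StrictMono q)
    (hqrig : ∀ f : Lp ℂ 2 ν,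
      Tendsto (fun n : ℕ => eLpNorm (fun y => f ((⇑S)^[q n] y) - f y) 2 ν)
        atTop (nhds 0))
    (c : ℝ) (hc : |c| ≤ 1)
    (hcc : Tendsto
      (fun n : ℕ => ∫ y, (-1 : ℝ) ^ (∑ i ∈ Finset.range (q n), φ ((⇑S)^[i] y)) ∂ν)
      atTop (nhds c)) :
    ∀ ξ η : Lp ℂ 2 ν,
      Tendsto
        (fun n : ℕ => ∫ y, (-1 : ℂ) ^ (∑ i ∈ Finset.range (q n), φ ((⇑S)^[i] y)) *
            ξ ((⇑S)^[q n] y) * (starRingEnd ℂ) (η y) ∂ν)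
        atTop
        (nhds ((c : ℂ) * ∫ y, ξ y * (starRingEnd ℂ) (η y) ∂ν)) :=
  weighted_operator_weak_limit_general ν S hS φ hφm hspan q hqrig c hcc
end

section
/- For each k ∈ ℕ the limit γ(k) := lim_{N→∞} (1/N) Σ_{n=1}^{N} (−1)^{s₂(n+k)+s₂(n)} exists; moreover γ(0) = 1, γ(1) = −1/3, and for every k ≥ 0 one has γ(2k) = γ(k) and γ(2k+1) = −(γ(k) + γ(k+1))/2. -/
/-!
Write `t n = (-1) ^ s₂(n)` and `S_k(N) = ∑_{n<N} t(n+k) t(n)`. Since `t(2n) = t(n)` and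
`t(2n+1) = -t(n)`, splitting `n < 2N` by parity gives `S_{2k}(2N) = 2 S_k(N)` and
`S_{2k+1}(2N) = -(S_k(N) + S_{k+1}(N))`. Defining `γ` by the recursion of the statement, the
discrepancy `E_k(N) = S_k(N) - γ(k) N` obeys the same two relations and moves by a bounded amount
from `N` to `N + 1`. By strong induction on `k` (for `k = 1` the relation reads
`E_1(2N) = -E_1(N)`), `E_k(N)` is at most a constant times the number of binary digits of `N`,
so `S_k(N) / N → γ(k)`.
-/

open Filter Finset Topology

theorem Finset.sum_range_two_mul {M : Type*} [AddCommMonoid M] (f : ℕ → M) (N : ℕ) :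
    ∑ n ∈ range (2 * N), f n = ∑ n ∈ range N, (f (2 * n) + f (2 * n + 1)) := by
  induction N with
  | zero => simp
  | succ N ih => rw [Nat.mul_succ, sum_range_succ, sum_range_succ, sum_range_succ, ih, add_assoc]

-- The `max` covers both the self-similar case `|E (2 * M)| = |E M|` and a bound on `E (2 * M)`
-- inherited from other sequences.
theorem abs_le_mul_length_digits_two {E : ℕ → ℝ} {B D : ℝ} (hD : 0 ≤ D) (h0 : E 0 = 0)
    (hstep : ∀ N, |E (N + 1) - E N| ≤ B)
    (hdouble : ∀ M, |E (2 * M)| ≤ max |E M| (D * (Nat.digits 2 M).length)) (N : ℕ) :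
    |E N| ≤ (B + D) * (Nat.digits 2 N).length := by
  induction N using Nat.strong_induction_on with | _ N ih
  rcases N.eq_zero_or_pos with rfl | hN
  · simp [h0]
  have hB : 0 ≤ B := (abs_nonneg _).trans (hstep 0)
  have hlength : (Nat.digits 2 N).length = (Nat.digits 2 (N / 2)).length + 1 := by
    rw [Nat.digits_def' one_lt_two hN, List.length_cons]
  have hparity : |E N| ≤ |E (2 * (N / 2))| + B := by
    obtain h | h := Nat.mod_two_eq_zero_or_one N
    · rw [show 2 * (N / 2) = N by omega]
      linarith
    · have := hstep (2 * (N / 2))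
      rw [show 2 * (N / 2) + 1 = N by omega] at this
      linarith [abs_sub_abs_le_abs_sub (E N) (E (2 * (N / 2)))]
  have hhalf : max |E (N / 2)| (D * (Nat.digits 2 (N / 2)).length)
      ≤ (B + D) * (Nat.digits 2 (N / 2)).length :=
    max_le (ih _ (by omega)) (by nlinarith [(Nat.digits 2 (N / 2)).length.cast_nonneg (α := ℝ)])
  rw [hlength, Nat.cast_succ]
  nlinarith [hdouble (N / 2)]

theorem tendsto_length_digits_two_div :
    Tendsto (fun N : ℕ => ((Nat.digits 2 N).length : ℝ) / N) atTop (𝓝 0) := by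
  have hlogb : Tendsto (fun x : ℝ => (Real.logb 2 x + 1) / x) atTop (𝓝 0) := by
    simpa [add_div] using (Real.tendsto_pow_logb_div_mul_add_atTop (b := 2) 1 0 1 one_ne_zero).add
      tendsto_inv_atTop_zero
  refine squeeze_zero (fun N => div_nonneg (Nat.cast_nonneg _) (Nat.cast_nonneg _)) (fun N => ?_)
    (hlogb.comp tendsto_natCast_atTop_atTop)
  refine div_le_div_of_nonneg_right ?_ (Nat.cast_nonneg N)
  rcases eq_or_ne N 0 with rfl | hN
  · simp
  rw [Nat.length_digits 2 N one_lt_two hN]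
  push_cast
  gcongr
  exact_mod_cast Real.natLog_le_logb N 2

theorem tendsto_inv_mul_sub_of_tendsto_div {S : ℕ → ℝ} {L : ℝ} (c : ℝ)
    (h : Tendsto (fun N => S N / N) atTop (𝓝 L)) :
    Tendsto (fun N : ℕ => (N : ℝ)⁻¹ * (S (N + 1) - c)) atTop (𝓝 L) := by
  have hshift := ((tendsto_add_atTop_iff_nat 1).2 h).mul
    (tendsto_add_mul_div_add_mul_atTop_nhds (1 : ℝ) 0 1 one_ne_zero)
  have := hshift.sub (tendsto_inv_atTop_nhds_zero_nat.const_mul c)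
  simp only [mul_one, div_one, mul_zero, sub_zero] at this
  refine this.congr' ?_
  filter_upwards [eventually_ne_atTop 0] with N hN
  push_cast
  field_simp
  ring

namespace ThueMorse

noncomputable def sign (n : ℕ) : ℝ := (-1) ^ (Nat.digits 2 n).sum

theorem sign_two_mul (n : ℕ) : sign (2 * n) = sign n := by
  rcases n.eq_zero_or_pos with rfl | hn
  · rfl
  rw [sign, Nat.digits_def' one_lt_two (by omega), Nat.mul_mod_right,
    Nat.mul_div_cancel_left n two_pos]
  simp [sign]

theorem sign_two_mul_add_one (n : ℕ) : sign (2 * n + 1) = -sign n := by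
  rw [sign, Nat.digits_def' one_lt_two (by omega), show (2 * n + 1) % 2 = 1 by omega,
    show (2 * n + 1) / 2 = n by omega, List.sum_cons, pow_add, pow_one, neg_one_mul, sign]

theorem sign_mul_self (n : ℕ) : sign n * sign n = 1 := by
  rw [sign, ← pow_add, ← two_mul, pow_mul, neg_one_sq, one_pow]

theorem abs_sign (n : ℕ) : |sign n| = 1 := by
  rw [sign, abs_pow, abs_neg, abs_one, one_pow]

noncomputable def corrSum (k N : ℕ) : ℝ := ∑ n ∈ range N, sign (n + k) * sign n

theorem corrSum_zero_left (N : ℕ) : corrSum 0 N = N := by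
  simp [corrSum, sign_mul_self]

theorem abs_corrSum_succ_sub (k N : ℕ) : |corrSum k (N + 1) - corrSum k N| = 1 := by
  rw [corrSum, corrSum, sum_range_succ, add_sub_cancel_left, abs_mul, abs_sign, abs_sign, one_mul]

theorem corrSum_two_mul (k N : ℕ) : corrSum (2 * k) (2 * N) = 2 * corrSum k N := by
  rw [corrSum, sum_range_two_mul, corrSum, mul_sum]
  refine sum_congr rfl fun n _ => ?_
  rw [show 2 * n + 2 * k = 2 * (n + k) by ring, show 2 * n + 1 + 2 * k = 2 * (n + k) + 1 by ring,
    sign_two_mul, sign_two_mul, sign_two_mul_add_one, sign_two_mul_add_one]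
  ring

theorem corrSum_two_mul_add_one (k N : ℕ) :
    corrSum (2 * k + 1) (2 * N) = -(corrSum k N + corrSum (k + 1) N) := by
  rw [corrSum, sum_range_two_mul, corrSum, corrSum, ← sum_add_distrib, ← sum_neg_distrib]
  refine sum_congr rfl fun n _ => ?_
  rw [show 2 * n + (2 * k + 1) = 2 * (n + k) + 1 by ring,
    show 2 * n + 1 + (2 * k + 1) = 2 * (n + (k + 1)) by ring,
    sign_two_mul, sign_two_mul, sign_two_mul_add_one, sign_two_mul_add_one]
  ring

theorem sum_Icc_sign_mul_sign (k N : ℕ) :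
    ∑ n ∈ Icc 1 N, sign (n + k) * sign n = corrSum k (N + 1) - sign k := by
  rw [corrSum, Nat.range_succ_eq_Icc_zero, ← add_sum_Ioc_eq_sum_Icc (Nat.zero_le N),
    ← Icc_add_one_left_eq_Ioc, zero_add, zero_add, show sign 0 = 1 by simp [sign], mul_one,
    add_sub_cancel_left]

-- `corr 1 = -1 / 3` solves the odd relation `x = -(1 + x) / 2` at `k = 0`; writing `k + 2` as
-- `2 m` or `2 m + 1`, the last clause uses `m = k / 2 + 1`.
noncomputable def corr : ℕ → ℝ
  | 0 => 1
  | 1 => -1 / 3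
  | k + 2 => if h : k % 2 = 0 then corr (k / 2 + 1) else -(corr (k / 2 + 1) + corr (k / 2 + 2)) / 2

theorem corr_two_mul (k : ℕ) : corr (2 * k) = corr k := by
  cases k with
  | zero => rfl
  | succ k => rw [show 2 * (k + 1) = 2 * k + 2 by ring, corr, dif_pos (by omega)]; congr 1; omega

theorem corr_two_mul_add_one (k : ℕ) : corr (2 * k + 1) = -(corr k + corr (k + 1)) / 2 := by
  cases k with
  | zero => rw [corr, corr]; norm_num
  | succ k =>
    rw [show 2 * (k + 1) + 1 = (2 * k + 1) + 2 by ring, corr, dif_neg (by omega),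
      show (2 * k + 1) / 2 = k by omega]

noncomputable def corrError (k N : ℕ) : ℝ := corrSum k N - corr k * N

theorem corrError_zero_right (k : ℕ) : corrError k 0 = 0 := by
  simp [corrError, corrSum]

theorem corrError_zero_left (N : ℕ) : corrError 0 N = 0 := by
  rw [corrError, corrSum_zero_left, corr, one_mul, sub_self]

theorem abs_corrError_succ_sub_le (k N : ℕ) :
    |corrError k (N + 1) - corrError k N| ≤ 1 + |corr k| := by
  have : corrError k (N + 1) - corrError k N = (corrSum k (N + 1) - corrSum k N) - corr k := by
    rw [corrError, corrError]; push_cast; ring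
  rw [this, ← abs_corrSum_succ_sub k N]
  exact abs_sub _ _

theorem corrError_two_mul (k N : ℕ) : corrError (2 * k) (2 * N) = 2 * corrError k N := by
  rw [corrError, corrError, corrSum_two_mul, corr_two_mul]; push_cast; ring

theorem corrError_two_mul_add_one (k N : ℕ) :
    corrError (2 * k + 1) (2 * N) = -(corrError k N + corrError (k + 1) N) := by
  rw [corrError, corrError, corrError, corrSum_two_mul_add_one, corr_two_mul_add_one]; push_cast; ring

theorem exists_abs_corrError_le (k : ℕ) :
    ∃ C, 0 ≤ C ∧ ∀ N, |corrError k N| ≤ C * (Nat.digits 2 N).length := by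
  induction k using Nat.strong_induction_on with | _ k ih
  have hbound : ∀ D, 0 ≤ D →
      (∀ M, |corrError k (2 * M)| ≤ max |corrError k M| (D * (Nat.digits 2 M).length)) →
      ∃ C, 0 ≤ C ∧ ∀ N, |corrError k N| ≤ C * (Nat.digits 2 N).length := fun D hD hdouble =>
    ⟨_, by positivity, abs_le_mul_length_digits_two hD (corrError_zero_right k)
      (abs_corrError_succ_sub_le k) hdouble⟩
  obtain ⟨j, rfl | rfl⟩ := Nat.even_or_odd' k
  · rcases j.eq_zero_or_pos with rfl | hj
    · exact ⟨0, le_rfl, fun N => by simp [corrError_zero_left]⟩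
    obtain ⟨C, hC, hCj⟩ := ih j (by omega)
    refine hbound (2 * C) (by positivity) fun M => le_max_of_le_right ?_
    rw [corrError_two_mul, abs_mul, abs_two, mul_assoc]
    exact mul_le_mul_of_nonneg_left (hCj M) zero_le_two
  · rcases j.eq_zero_or_pos with rfl | hj
    · refine hbound 0 le_rfl fun M => le_max_of_le_left ?_
      rw [corrError_two_mul_add_one, corrError_zero_left, zero_add, abs_neg]
    obtain ⟨C, hC, hCj⟩ := ih j (by omega)
    obtain ⟨C', hC', hCj'⟩ := ih (j + 1) (by omega)
    refine hbound (C + C') (by positivity) fun M => le_max_of_le_right ?_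
    rw [corrError_two_mul_add_one, abs_neg, add_mul]
    exact (abs_add_le _ _).trans (add_le_add (hCj M) (hCj' M))

theorem tendsto_corrSum_div (k : ℕ) :
    Tendsto (fun N => corrSum k N / N) atTop (𝓝 (corr k)) := by
  obtain ⟨C, -, hC⟩ := exists_abs_corrError_le k
  have herr : Tendsto (fun N : ℕ => corrError k N / N) atTop (𝓝 0) := by
    refine squeeze_zero_norm (fun N => ?_) (by simpa using tendsto_length_digits_two_div.const_mul C)
    rw [Real.norm_eq_abs, abs_div, Nat.abs_cast, ← mul_div_assoc]
    exact div_le_div_of_nonneg_right (hC N) (Nat.cast_nonneg N)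
  have := herr.add_const (corr k)
  rw [zero_add] at this
  refine this.congr' ?_
  filter_upwards [eventually_ne_atTop 0] with N hN
  rw [corrError]
  field_simp
  ring

end ThueMorse

open ThueMorse in
/-- For each `k ∈ ℕ` the limit
`γ(k) = lim_{N→∞} (1/N) Σ_{n=1}^{N} (−1)^{s₂(n+k)+s₂(n)}` exists; moreover `γ(0) = 1`,
`γ(1) = −1/3`, and for every `k ≥ 0` one has `γ(2k) = γ(k)` and
`γ(2k+1) = −(γ(k) + γ(k+1))/2`. Here `s₂(n)` is the number of ones in the binary
expansion of `n`. -/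
theorem thue_morse_correlations_exist :
    ∃ γ : ℕ → ℝ,
      (∀ k : ℕ,
        Tendsto (fun N : ℕ => (N : ℝ)⁻¹ *
            ∑ n ∈ Finset.Icc 1 N,
              (-1 : ℝ) ^ ((Nat.digits 2 (n + k)).sum + (Nat.digits 2 n).sum))
          atTop (nhds (γ k))) ∧
      γ 0 = 1 ∧ γ 1 = -1/3 ∧
      (∀ k : ℕ, γ (2 * k) = γ k ∧ γ (2 * k + 1) = -(γ k + γ (k + 1)) / 2) := by
  refine ⟨corr, fun k => ?_, by rw [corr], by rw [corr],
    fun k => ⟨corr_two_mul k, corr_two_mul_add_one k⟩⟩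
  simp_rw [pow_add]
  change Tendsto (fun N : ℕ => (N : ℝ)⁻¹ * ∑ n ∈ Icc 1 N, sign (n + k) * sign n) atTop _
  simp_rw [sum_Icc_sign_mul_sign]
  exact tendsto_inv_mul_sub_of_tendsto_div _ (tendsto_corrSum_div k)
end

section
/- Let p ≥ 2 be a natural number and let m : ℕ → ℝ take values in {−1, 1} and be strongly p-multiplicative, i.e. m(a·p^j + b) = m(a)·m(b) for all a, b, j ∈ ℕ with b < p^j. Fix k ∈ ℕ and suppose the limit γ = lim_{N→∞} (1/N) Σ_{n=1}^{N} m(n+k)·m(n) exists. Then for every j ∈ ℕ the limit lim_{N→∞} (1/N) Σ_{n=1}^{N} m(n + k·p^j)·m(n) exists and equals γ. -/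
/-!
Put `q = p ^ j` and `g a = m (a + k) * m a`. Writing `n = a * q + r` with `r < q`, strong
multiplicativity and `m r ^ 2 = 1` give `m (n + k * q) * m n = g a`, i.e. the correlation at shift
`k * q` is the mean of `n ↦ g (n / q)`. This sequence repeats each value of `g` exactly `q` times,
so up to a boundary term of size `O(q)` its sum over `n < N` is `q` times the sum of `g` over
`a < N / q`, and the means converge to the same limit.
-/

open Filter Finset Topology

theorem sum_range_mul_comp_div {M : Type*} [AddCommMonoid M] (g : ℕ → M) (q K : ℕ) :
    ∑ n ∈ range (q * K), g (n / q) = q • ∑ a ∈ range K, g a := by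
  induction K with
  | zero => simp
  | succ K ih =>
    have hblock : ∀ i ∈ range q, g ((q * K + i) / q) = g K := fun i hi => by
      have hi : i < q := mem_range.mp hi
      rw [Nat.mul_add_div (by omega), Nat.div_eq_of_lt hi, add_zero]
    rw [mul_add_one, sum_range_add, ih, sum_congr rfl hblock, sum_const, card_range,
      sum_range_succ, smul_add]

theorem sum_range_comp_div {M : Type*} [AddCommMonoid M] (g : ℕ → M) (q N : ℕ) :
    ∑ n ∈ range N, g (n / q) = q • ∑ a ∈ range (N / q), g a + (N % q) • g (N / q) := by
  have htail : ∀ i ∈ range (N % q), g ((q * (N / q) + i) / q) = g (N / q) := fun i hi => by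
    rcases Nat.eq_zero_or_pos q with rfl | hq
    · simp
    · rw [Nat.mul_add_div hq, Nat.div_eq_of_lt ((mem_range.mp hi).trans (Nat.mod_lt _ hq)),
        add_zero]
  conv_lhs => rw [← Nat.div_add_mod N q]
  rw [sum_range_add, sum_range_mul_comp_div, sum_congr rfl htail, sum_const, card_range]

theorem tendsto_inv_mul_of_abs_le {u : ℕ → ℝ} {B : ℝ} (hu : ∀ N, |u N| ≤ B) :
    Tendsto (fun N : ℕ => (N : ℝ)⁻¹ * u N) atTop (𝓝 0) :=
  tendsto_inv_atTop_nhds_zero_nat.zero_mul_isBoundedUnder_le (isBoundedUnder_of ⟨B, hu⟩)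

theorem sum_Icc_one_add_apply_zero {M : Type*} [AddCommMonoid M] (f : ℕ → M) (N : ℕ) :
    ∑ n ∈ Icc 1 N, f n + f 0 = ∑ n ∈ range N, f n + f N := by
  induction N with
  | zero => simp
  | succ N ih => rw [sum_Icc_succ_top (by omega), add_right_comm, ih, sum_range_succ]

theorem tendsto_inv_mul_sum_Icc_iff {f : ℕ → ℝ} {C γ : ℝ} (hf : ∀ n, |f n| ≤ C) :
    Tendsto (fun N : ℕ => (N : ℝ)⁻¹ * ∑ n ∈ Icc 1 N, f n) atTop (𝓝 γ) ↔
      Tendsto (fun N : ℕ => (N : ℝ)⁻¹ * ∑ n ∈ range N, f n) atTop (𝓝 γ) := by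
  have hdiff : Tendsto (fun N : ℕ => (N : ℝ)⁻¹ * (f N - f 0)) atTop (𝓝 0) :=
    tendsto_inv_mul_of_abs_le fun N => (abs_sub _ _).trans (add_le_add (hf N) (hf 0))
  have hsplit : ∀ N : ℕ, (N : ℝ)⁻¹ * ∑ n ∈ Icc 1 N, f n =
      (N : ℝ)⁻¹ * ∑ n ∈ range N, f n + (N : ℝ)⁻¹ * (f N - f 0) := fun N => by
    rw [← mul_add]
    linear_combination (N : ℝ)⁻¹ * sum_Icc_one_add_apply_zero f N
  simp_rw [hsplit]
  exact ⟨fun h => by simpa using h.sub hdiff, fun h => by simpa using h.add hdiff⟩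

theorem tendsto_inv_mul_sum_range_comp_div {g : ℕ → ℝ} {C γ : ℝ} {q : ℕ} (hq : 0 < q)
    (hg : ∀ n, |g n| ≤ C)
    (h : Tendsto (fun N : ℕ => (N : ℝ)⁻¹ * ∑ n ∈ range N, g n) atTop (𝓝 γ)) :
    Tendsto (fun N : ℕ => (N : ℝ)⁻¹ * ∑ n ∈ range N, g (n / q)) atTop (𝓝 γ) := by
  set A : ℕ → ℝ := fun M => (M : ℝ)⁻¹ * ∑ n ∈ range M, g n
  have hsum : ∀ M : ℕ, ∑ n ∈ range M, g n = M * A M := fun M => by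
    rcases eq_or_ne M 0 with rfl | hM
    · simp
    · exact (mul_inv_cancel_left₀ (Nat.cast_ne_zero.2 hM : (M : ℝ) ≠ 0) _).symm
  have hmod_le : ∀ N, ((N % q : ℕ) : ℝ) ≤ q := fun N => by exact_mod_cast (Nat.mod_lt N hq).le
  have hrem : Tendsto (fun N : ℕ => (N : ℝ)⁻¹ * (N % q : ℕ)) atTop (𝓝 0) :=
    tendsto_inv_mul_of_abs_le fun N => by rw [Nat.abs_cast]; exact hmod_le N
  have hrem' : Tendsto (fun N : ℕ => (N : ℝ)⁻¹ * ((N % q : ℕ) * g (N / q))) atTop (𝓝 0) :=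
    tendsto_inv_mul_of_abs_le fun N => by
      rw [abs_mul, Nat.abs_cast]
      exact mul_le_mul (hmod_le N) (hg _) (abs_nonneg _) (Nat.cast_nonneg _)
  have hlim : Tendsto (fun N : ℕ => (1 - (N : ℝ)⁻¹ * (N % q : ℕ)) * A (N / q) +
      (N : ℝ)⁻¹ * ((N % q : ℕ) * g (N / q))) atTop (𝓝 ((1 - 0) * γ + 0)) :=
    ((tendsto_const_nhds.sub hrem).mul (h.comp (Nat.tendsto_div_const_atTop hq.ne'))).add hrem'
  rw [sub_zero, one_mul, add_zero] at hlim
  refine hlim.congr' ?_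
  filter_upwards [eventually_ne_atTop 0] with N hN
  have hN : (N : ℝ) = q * (N / q : ℕ) + (N % q : ℕ) := by exact_mod_cast (Nat.div_add_mod N q).symm
  simp only [sum_range_comp_div, nsmul_eq_mul, hsum]
  field_simp
  linear_combination A (N / q) * hN

theorem apply_add_mul_mul_apply_eq {R : Type*} [CommMonoid R] {m : ℕ → R} {q : ℕ} (hq : 0 < q)
    (hmult : ∀ a b, b < q → m (a * q + b) = m a * m b) (hm : ∀ n, m n * m n = 1) (k n : ℕ) :
    m (n + k * q) * m n = m (n / q + k) * m (n / q) := by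
  have hr := Nat.mod_lt n hq
  have hnk : n + k * q = (n / q + k) * q + n % q := by linarith [Nat.div_add_mod' n q]
  calc m (n + k * q) * m n = m ((n / q + k) * q + n % q) * m (n / q * q + n % q) := by
        rw [← hnk, Nat.div_add_mod']
    _ = m (n / q + k) * m (n / q) * (m (n % q) * m (n % q)) := by
        rw [hmult _ _ hr, hmult _ _ hr]; ac_rfl
    _ = m (n / q + k) * m (n / q) := by rw [hm, mul_one]

/-- If `m : ℕ → {−1,1}` is strongly `p`-multiplicative
(`m(a·p^j + b) = m(a)·m(b)` whenever `b < p^j`), `k ∈ ℕ`, and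
`γ = lim_N (1/N) Σ_{n=1}^N m(n+k)m(n)` exists, then for every `j` the limit
`lim_N (1/N) Σ_{n=1}^N m(n + k·p^j) m(n)` exists and equals `γ`. -/
theorem strongly_multiplicative_correlation_invariant
    (p : ℕ) (hp : 2 ≤ p) (m : ℕ → ℝ) (hm : ∀ n, m n = 1 ∨ m n = -1)
    (hmult : ∀ a b j : ℕ, b < p ^ j → m (a * p ^ j + b) = m a * m b)
    (k : ℕ) (γ : ℝ)
    (hγ : Tendsto (fun N : ℕ => (N : ℝ)⁻¹ * ∑ n ∈ Finset.Icc 1 N, m (n + k) * m n)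
      atTop (nhds γ)) :
    ∀ j : ℕ,
      Tendsto (fun N : ℕ => (N : ℝ)⁻¹ * ∑ n ∈ Finset.Icc 1 N, m (n + k * p ^ j) * m n)
        atTop (nhds γ) := by
  intro j
  have hq : 0 < p ^ j := pow_pos (by omega) j
  have habs : ∀ n, |m n| = 1 := fun n => by rcases hm n with h | h <;> simp [h]
  have hcorr : ∀ n, |m (n + k) * m n| ≤ 1 := fun n => by rw [abs_mul, habs, habs, one_mul]
  have hsq : ∀ n, m n * m n = 1 := fun n => by rw [← abs_mul_abs_self, habs, one_mul]
  have hshift : ∀ n, m (n + k * p ^ j) * m n = m (n / p ^ j + k) * m (n / p ^ j) :=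
    apply_add_mul_mul_apply_eq hq (fun a b => hmult a b j) hsq k
  simp only [hshift]
  rw [tendsto_inv_mul_sum_Icc_iff hcorr] at hγ
  rw [tendsto_inv_mul_sum_Icc_iff (f := fun n => m (n / p ^ j + k) * m (n / p ^ j))
    fun n => hcorr (n / p ^ j)]
  exact tendsto_inv_mul_sum_range_comp_div (g := fun n => m (n + k) * m n) hq hcorr hγ
end

section
/- Let c : ℕ → ℚ be defined by c(0) = 1, c(1) = −1/3, c(2n) = c(n) for n ≥ 1, and c(2n+1) = −(c(n) + c(n+1))/2 for n ≥ 1. Then for all natural numbers n, a ≥ 1, c(2^a·n + 1) = (−1/2)^a·(c(n+1) + c(n)/3) − c(n)/3. -/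
theorem apply_two_pow_mul_eq_of_apply_two_mul_eq {α : Type*} {f : ℕ → α}
    (heven : ∀ n : ℕ, 1 ≤ n → f (2 * n) = f n) {n : ℕ} (hn : 1 ≤ n) (a : ℕ) :
    f (2 ^ a * n) = f n := by
  induction a with
  | zero => simp
  | succ a ih =>
    rw [pow_succ', mul_assoc, heven _ (Nat.one_le_iff_ne_zero.mpr (by positivity)), ih]

theorem eq_pow_mul_sub_add_of_affine_recurrence {R : Type*} [CommRing R] {x : ℕ → R} {r p : R}
    (hx : ∀ a, x (a + 1) = r * x a + (1 - r) * p) (a : ℕ) :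
    x a = r ^ a * (x 0 - p) + p := by
  induction a with
  | zero => simp
  | succ a ih => rw [hx, ih]; ring

theorem thue_morse_fourier_recurrence_general
    (c : ℕ → ℚ)
    (heven : ∀ n : ℕ, 1 ≤ n → c (2 * n) = c n)
    (hodd : ∀ n : ℕ, 1 ≤ n → c (2 * n + 1) = -(c n + c (n + 1)) / 2) :
    ∀ n a : ℕ, 1 ≤ n → 1 ≤ a →
      c (2 ^ a * n + 1) = (-1/2 : ℚ) ^ a * (c (n + 1) + c n / 3) - c n / 3 := by
  intro n a hn _
  -- `a ↦ c (2 ^ a * n + 1)` iterates `x ↦ -(c n + x) / 2`, whose fixed point is `-c n / 3`.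
  have hstep : ∀ a : ℕ, c (2 ^ (a + 1) * n + 1)
      = (-1/2) * c (2 ^ a * n + 1) + (1 - (-1/2)) * (-(c n / 3)) := by
    intro a
    rw [pow_succ', mul_assoc, hodd _ (Nat.one_le_iff_ne_zero.mpr (by positivity)),
      apply_two_pow_mul_eq_of_apply_two_mul_eq heven hn]
    ring
  rw [eq_pow_mul_sub_add_of_affine_recurrence (x := fun a ↦ c (2 ^ a * n + 1)) hstep a]
  simp only [pow_zero, one_mul]
  ring

/-- Let `c : ℕ → ℚ` satisfy `c(0) = 1`, `c(1) = −1/3`, `c(2n) = c(n)` for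
`n ≥ 1`, and `c(2n+1) = −(c(n)+c(n+1))/2` for `n ≥ 1`. Then for all `n, a ≥ 1`,
`c(2^a·n + 1) = (−1/2)^a·(c(n+1) + c(n)/3) − c(n)/3`. -/
theorem thue_morse_fourier_recurrence
    (c : ℕ → ℚ) (h0 : c 0 = 1) (h1 : c 1 = -1/3)
    (heven : ∀ n : ℕ, 1 ≤ n → c (2 * n) = c n)
    (hodd : ∀ n : ℕ, 1 ≤ n → c (2 * n + 1) = -(c n + c (n + 1)) / 2) :
    ∀ n a : ℕ, 1 ≤ n → 1 ≤ a →
      c (2 ^ a * n + 1) = (-1/2 : ℚ) ^ a * (c (n + 1) + c n / 3) - c n / 3 :=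
  thue_morse_fourier_recurrence_general c heven hodd
end

section
/- Let c : ℕ → ℚ be defined by c(0) = 1, c(1) = −1/3, c(2n) = c(n) for n ≥ 1, and c(2n+1) = −(c(n) + c(n+1))/2 for n ≥ 1. For every odd K ≥ 5, either c(K) = 0 or v₂(c(K)) ≥ 2 − l(K); moreover, for every odd K ≥ 9, c(K) ≠ 0 and v₂(c(K)) = 2 − l(K). -/
/-!
Writing an odd `K ≥ 3` as `2 ^ a * m + 1` with `m` odd gives `l K = a + l m`, hence
`l K = ⌊log₂ K⌋`. Unfolding the recursion `a` times yields, with `D m = 3 c(m+1) + c m`,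

  `3·2^a c(2^a m + 1) = -2^a c m + (-1)^a D m`,
  `3·2^a D(2^a m + 1) = -2^(a+2) c m - 5 (-1)^a D m`.

After rescaling `c K` and `D K` by `2 ^ (⌊log₂ K⌋ - 2)` no denominators are left, and in `ℚ_[2]`
the term `± D m` is a unit. Hence the rescaled `D K` is a unit for every odd `K`, while the
rescaled `c K` is integral for `K ≥ 5` and a unit for `K ≥ 9`, where `2^a c m` is the smaller term.
-/

open Nat (log)

namespace Nat

theorem log_two_two_pow_mul_add_one {a m : ℕ} (ha : 1 ≤ a) (hm : m ≠ 0) :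
    log 2 (2 ^ a * m + 1) = a + log 2 m := by
  refine log_eq_of_pow_le_of_lt_pow ?_ ?_
  · rw [pow_add]
    exact (Nat.mul_le_mul_left _ (pow_log_le_self 2 hm)).trans (le_succ _)
  · have hlt : m < 2 ^ (log 2 m + 1) := lt_pow_succ_log_self one_lt_two m
    have h2a : 1 < 2 ^ a := Nat.one_lt_two_pow (by omega)
    calc 2 ^ a * m + 1 < 2 ^ a * (m + 1) := by rw [mul_add_one]; omega
      _ ≤ 2 ^ (a + log 2 m + 1) := by
        rw [add_assoc, pow_add]; exact Nat.mul_le_mul_left _ hlt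

theorem exists_eq_two_pow_mul_odd_add_one {K : ℕ} (hK : Odd K) (h3 : 3 ≤ K) :
    ∃ a m, 1 ≤ a ∧ Odd m ∧ K = 2 ^ a * m + 1 := by
  obtain ⟨a, m, hm, hKm⟩ := exists_eq_two_pow_mul_odd (n := K - 1) (by omega)
  refine ⟨a, m, Nat.one_le_iff_ne_zero.2 ?_, hm, by omega⟩
  rintro rfl
  obtain ⟨k, rfl⟩ := hK
  obtain ⟨j, rfl⟩ := hm
  omega

end Nat

theorem padicValNat_two_pow_mul_of_odd {a m : ℕ} (hm : Odd m) :
    padicValNat 2 (2 ^ a * m) = a := by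
  rw [padicValNat.mul (by positivity) hm.pos.ne', padicValNat.prime_pow,
    padicValNat.eq_zero_of_not_dvd hm.not_two_dvd_nat, add_zero]

theorem eq_log_two_of_rec {l : ℕ → ℕ} (hl1 : l 1 = 0)
    (hlrec : ∀ K : ℕ, Odd K → 3 ≤ K →
      l K = padicValNat 2 (K - 1) + l ((K - 1) / 2 ^ padicValNat 2 (K - 1)))
    {K : ℕ} (hK : Odd K) : l K = log 2 K := by
  induction K using Nat.strong_induction_on with
  | _ K ih =>
  obtain rfl | h3 : K = 1 ∨ 3 ≤ K := by obtain ⟨k, rfl⟩ := hK; omega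
  · simp [hl1]
  obtain ⟨a, m, ha, hm, rfl⟩ := Nat.exists_eq_two_pow_mul_odd_add_one hK h3
  have hmK : m < 2 ^ a * m + 1 := by
    have := Nat.le_mul_of_pos_left m (Nat.two_pow_pos a); omega
  rw [hlrec _ hK h3, Nat.add_sub_cancel, padicValNat_two_pow_mul_of_odd hm,
    Nat.mul_div_cancel_left _ (Nat.two_pow_pos a), ih m hmK hm,
    Nat.log_two_two_pow_mul_add_one ha hm.pos.ne']

theorem Padic.norm_ratCast_mul_zpow {p : ℕ} [Fact p.Prime] {q : ℚ} (hq : q ≠ 0) (n : ℤ) :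
    ‖(q : ℚ_[p]) * (p : ℚ_[p]) ^ n‖ = (p : ℝ) ^ (-(padicValRat p q + n)) := by
  rw [norm_mul, Padic.norm_eq_zpow_neg_valuation (by exact_mod_cast hq), Padic.valuation_ratCast,
    Padic.norm_p_zpow, ← zpow_add₀ (by exact_mod_cast (Fact.out : p.Prime).ne_zero), neg_add]

namespace TwoAdic

theorem norm_three : ‖(3 : ℚ_[2])‖ = 1 := by
  simpa using Padic.norm_natCast_eq_one_iff (p := 2) (n := 3) |>.2 (by decide)

theorem norm_five : ‖(5 : ℚ_[2])‖ = 1 := by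
  simpa using Padic.norm_natCast_eq_one_iff (p := 2) (n := 5) |>.2 (by decide)

theorem norm_three_mul (x : ℚ_[2]) : ‖3 * x‖ = ‖x‖ := by
  rw [norm_mul, norm_three, one_mul]

theorem norm_two_pow_mul (n : ℕ) (x : ℚ_[2]) : ‖2 ^ n * x‖ = ‖x‖ / 2 ^ n := by
  rw [norm_mul, show (2 : ℚ_[2]) = (2 : ℕ) by norm_num, Padic.norm_p_pow]
  simp [div_eq_inv_mul, zpow_neg]

theorem norm_eq_of_three_mul_eq_add {u v z : ℚ_[2]} (h : 3 * z = u + v) (huv : ‖u‖ < ‖v‖) :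
    ‖z‖ = ‖v‖ := by
  rw [← norm_three_mul, h, IsUltrametricDist.norm_add_eq_max_of_norm_ne_norm huv.ne,
    max_eq_right huv.le]

theorem norm_le_of_three_mul_eq_add {u v z : ℚ_[2]} (h : 3 * z = u + v) :
    ‖z‖ ≤ max ‖u‖ ‖v‖ := by
  rw [← norm_three_mul, h]
  exact IsUltrametricDist.norm_add_le_max u v

end TwoAdic

open TwoAdic

section Recursion

variable {c : ℕ → ℚ}

theorem apply_two_pow_mul (heven : ∀ n : ℕ, 1 ≤ n → c (2 * n) = c n) (a : ℕ) {m : ℕ}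
    (hm : m ≠ 0) : c (2 ^ a * m) = c m := by
  induction a with
  | zero => rw [pow_zero, one_mul]
  | succ a ih =>
    rw [pow_succ', mul_assoc, heven _ (Nat.one_le_iff_ne_zero.2 (by positivity)), ih]

theorem three_mul_two_pow_mul_apply_two_pow_mul_add_one
    (heven : ∀ n : ℕ, 1 ≤ n → c (2 * n) = c n)
    (hodd : ∀ n : ℕ, 1 ≤ n → c (2 * n + 1) = -(c n + c (n + 1)) / 2) (a : ℕ) {m : ℕ}
    (hm : m ≠ 0) :
    3 * 2 ^ a * c (2 ^ a * m + 1) = -2 ^ a * c m + (-1) ^ a * (3 * c (m + 1) + c m) := by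
  induction a with
  | zero => simp only [pow_zero, one_mul]; ring
  | succ a ih =>
    rw [show 2 ^ (a + 1) * m + 1 = 2 * (2 ^ a * m) + 1 by ring,
      hodd _ (Nat.one_le_iff_ne_zero.2 (by positivity)), apply_two_pow_mul heven a hm]
    linear_combination -ih

theorem three_mul_two_pow_mul_companion_two_pow_mul_add_one
    (heven : ∀ n : ℕ, 1 ≤ n → c (2 * n) = c n)
    (hodd : ∀ n : ℕ, 1 ≤ n → c (2 * n + 1) = -(c n + c (n + 1)) / 2) {a m : ℕ} (ha : 1 ≤ a)
    (hm : m ≠ 0) :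
    3 * 2 ^ a * (3 * c (2 ^ a * m + 2) + c (2 ^ a * m + 1))
      = -2 ^ (a + 2) * c m - 5 * (-1) ^ a * (3 * c (m + 1) + c m) := by
  obtain ⟨b, rfl⟩ := Nat.exists_eq_add_of_le' ha
  have hhalf : c (2 ^ (b + 1) * m + 2) = c (2 ^ b * m + 1) := by
    rw [pow_succ', mul_assoc, ← mul_add_one, heven _ (Nat.le_add_left 1 _)]
  rw [hhalf]
  linear_combination 6 * three_mul_two_pow_mul_apply_two_pow_mul_add_one heven hodd b hm
    + three_mul_two_pow_mul_apply_two_pow_mul_add_one heven hodd (b + 1) hm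

end Recursion

section Scaled

variable {c : ℕ → ℚ}

noncomputable def scaledCoeff (c : ℕ → ℚ) (K : ℕ) : ℚ_[2] :=
  c K * 2 ^ ((log 2 K : ℤ) - 2)

noncomputable def scaledCompanion (c : ℕ → ℚ) (K : ℕ) : ℚ_[2] :=
  ((3 * c (K + 1) + c K : ℚ) : ℚ_[2]) * 2 ^ ((log 2 K : ℤ) - 2)

theorem two_zpow_log_two_pow_mul_add_one_sub_two {a m : ℕ} (ha : 1 ≤ a) (hm : m ≠ 0) :
    (2 : ℚ_[2]) ^ ((log 2 (2 ^ a * m + 1) : ℤ) - 2) = 2 ^ a * 2 ^ ((log 2 m : ℤ) - 2) := by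
  rw [Nat.log_two_two_pow_mul_add_one ha hm, Nat.cast_add, add_sub_assoc,
    zpow_add₀ two_ne_zero, zpow_natCast]

theorem three_mul_scaledCoeff_two_pow_mul_add_one
    (heven : ∀ n : ℕ, 1 ≤ n → c (2 * n) = c n)
    (hodd : ∀ n : ℕ, 1 ≤ n → c (2 * n + 1) = -(c n + c (n + 1)) / 2) {a m : ℕ} (ha : 1 ≤ a)
    (hm : m ≠ 0) :
    3 * scaledCoeff c (2 ^ a * m + 1)
      = -2 ^ a * scaledCoeff c m + (-1) ^ a * scaledCompanion c m := by
  have h := congrArg (Rat.cast : ℚ → ℚ_[2])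
    (three_mul_two_pow_mul_apply_two_pow_mul_add_one heven hodd a hm)
  push_cast at h
  rw [scaledCoeff, scaledCoeff, scaledCompanion, two_zpow_log_two_pow_mul_add_one_sub_two ha hm]
  push_cast
  linear_combination (2 : ℚ_[2]) ^ ((log 2 m : ℤ) - 2) * h

theorem three_mul_scaledCompanion_two_pow_mul_add_one
    (heven : ∀ n : ℕ, 1 ≤ n → c (2 * n) = c n)
    (hodd : ∀ n : ℕ, 1 ≤ n → c (2 * n + 1) = -(c n + c (n + 1)) / 2) {a m : ℕ} (ha : 1 ≤ a)
    (hm : m ≠ 0) :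
    3 * scaledCompanion c (2 ^ a * m + 1)
      = -2 ^ (a + 2) * scaledCoeff c m - 5 * (-1) ^ a * scaledCompanion c m := by
  have h := congrArg (Rat.cast : ℚ → ℚ_[2])
    (three_mul_two_pow_mul_companion_two_pow_mul_add_one heven hodd ha hm)
  push_cast at h
  rw [scaledCoeff, scaledCompanion, scaledCompanion,
    two_zpow_log_two_pow_mul_add_one_sub_two ha hm]
  push_cast
  linear_combination (2 : ℚ_[2]) ^ ((log 2 m : ℤ) - 2) * h

theorem norm_scaledCoeff_one (h1 : c 1 = -1 / 3) : ‖scaledCoeff c 1‖ = 4 := by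
  rw [scaledCoeff, h1, Nat.log_one_right,
    show ((-1 / 3 : ℚ) : ℚ_[2]) * 2 ^ (((0 : ℕ) : ℤ) - 2) = -(3 * (2 ^ 2 * 1))⁻¹ by norm_num,
    norm_neg, norm_inv, norm_three_mul, norm_two_pow_mul]
  norm_num

theorem norm_scaledCompanion_one (h1 : c 1 = -1 / 3)
    (heven : ∀ n : ℕ, 1 ≤ n → c (2 * n) = c n) : ‖scaledCompanion c 1‖ = 1 := by
  rw [scaledCompanion, heven 1 le_rfl, h1, Nat.log_one_right]
  norm_num [norm_three]

theorem norm_scaled_two_pow_mul_add_one (heven : ∀ n : ℕ, 1 ≤ n → c (2 * n) = c n)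
    (hodd : ∀ n : ℕ, 1 ≤ n → c (2 * n + 1) = -(c n + c (n + 1)) / 2) {a m : ℕ} (ha : 1 ≤ a)
    (hm : m ≠ 0) (hdm : ‖scaledCompanion c m‖ = 1)
    (hxm : ‖scaledCoeff c m‖ ≤ max 1 (4 / 2 ^ log 2 m)) :
    ‖scaledCompanion c (2 ^ a * m + 1)‖ = 1 ∧
      ‖scaledCoeff c (2 ^ a * m + 1)‖ ≤ max 1 (4 / 2 ^ log 2 (2 ^ a * m + 1)) ∧
      (3 ≤ log 2 (2 ^ a * m + 1) → ‖scaledCoeff c (2 ^ a * m + 1)‖ = 1) := by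
  have h2a : (1 : ℝ) < 2 ^ a := one_lt_pow₀ one_lt_two (by omega)
  have hx4 : ‖scaledCoeff c m‖ ≤ 4 :=
    hxm.trans (max_le (by norm_num) (div_le_self (by norm_num) (one_le_pow₀ one_le_two)))
  have hbound : ‖scaledCoeff c m‖ / 2 ^ a ≤ max (1 / 2 ^ a) (4 / 2 ^ log 2 (2 ^ a * m + 1)) := by
    rw [Nat.log_two_two_pow_mul_add_one ha hm, pow_add, mul_comm (2 ^ a : ℝ), ← div_div,
      max_div_div_right (by positivity)]
    exact div_le_div_of_nonneg_right hxm (by positivity)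
  have hxK := three_mul_scaledCoeff_two_pow_mul_add_one heven hodd ha hm
  have hdK := three_mul_scaledCompanion_two_pow_mul_add_one heven hodd ha hm
  rw [sub_eq_add_neg] at hdK
  have hunit : ‖(-1) ^ a * scaledCompanion c m‖ = 1 := by simpa using hdm
  refine ⟨?_, ?_, fun hL => ?_⟩
  · have hv : ‖-(5 * (-1) ^ a * scaledCompanion c m)‖ = 1 := by
      rw [norm_neg, mul_assoc, norm_mul, norm_five, hunit, one_mul]
    refine (norm_eq_of_three_mul_eq_add hdK ?_).trans hv
    rw [hv, neg_mul, norm_neg, norm_two_pow_mul, pow_add, div_lt_one (by positivity)]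
    nlinarith
  · refine (norm_le_of_three_mul_eq_add hxK).trans ?_
    rw [neg_mul, norm_neg, norm_two_pow_mul, hunit]
    refine max_le (hbound.trans (max_le_max ?_ le_rfl)) (le_max_left _ _)
    exact div_le_one_of_le₀ (one_le_pow₀ one_le_two) (by positivity)
  · refine (norm_eq_of_three_mul_eq_add hxK ?_).trans hunit
    rw [hunit, neg_mul, norm_neg, norm_two_pow_mul]
    refine hbound.trans_lt (max_lt ?_ ?_)
    · rwa [div_lt_one (by positivity)]
    · have h8 : (2 : ℝ) ^ 3 ≤ 2 ^ log 2 (2 ^ a * m + 1) := pow_le_pow_right₀ one_le_two hL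
      rw [div_lt_one (by positivity)]
      linarith

/-- `max 1 (4 / 2 ^ log 2 K)` exceeds `1` only at `K = 1, 3`, where the rescaled coefficient has
norm `4` and `2`. -/
theorem norm_scaled_of_odd (h1 : c 1 = -1 / 3) (heven : ∀ n : ℕ, 1 ≤ n → c (2 * n) = c n)
    (hodd : ∀ n : ℕ, 1 ≤ n → c (2 * n + 1) = -(c n + c (n + 1)) / 2) {K : ℕ} (hK : Odd K) :
    ‖scaledCompanion c K‖ = 1 ∧ ‖scaledCoeff c K‖ ≤ max 1 (4 / 2 ^ log 2 K) ∧
      (3 ≤ log 2 K → ‖scaledCoeff c K‖ = 1) := by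
  induction K using Nat.strong_induction_on with
  | _ K ih =>
  obtain rfl | h3 : K = 1 ∨ 3 ≤ K := by obtain ⟨k, rfl⟩ := hK; omega
  · refine ⟨norm_scaledCompanion_one h1 heven, ?_, by simp⟩
    rw [norm_scaledCoeff_one h1]
    norm_num
  obtain ⟨a, m, ha, hm, rfl⟩ := Nat.exists_eq_two_pow_mul_odd_add_one hK h3
  have hmK : m < 2 ^ a * m + 1 := by
    have := Nat.le_mul_of_pos_left m (Nat.two_pow_pos a); omega
  obtain ⟨hdm, hxm, -⟩ := ih m hmK hm
  exact norm_scaled_two_pow_mul_add_one heven hodd ha hm.pos.ne' hdm hxm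

theorem norm_scaledCoeff_of_ne_zero {K : ℕ} (hc : c K ≠ 0) :
    ‖scaledCoeff c K‖ = 2 ^ (-(padicValRat 2 (c K) + ((log 2 K : ℤ) - 2))) := by
  have h := Padic.norm_ratCast_mul_zpow (p := 2) hc ((log 2 K : ℤ) - 2)
  rwa [Nat.cast_ofNat, Nat.cast_ofNat] at h

theorem padicValRat_of_norm_scaledCoeff_le_one {K : ℕ} (h : ‖scaledCoeff c K‖ ≤ 1) :
    c K = 0 ∨ 2 - (log 2 K : ℤ) ≤ padicValRat 2 (c K) := by
  refine or_iff_not_imp_left.2 fun hc => ?_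
  rw [norm_scaledCoeff_of_ne_zero hc, zpow_le_one_iff_right₀ one_lt_two] at h
  omega

theorem padicValRat_of_norm_scaledCoeff_eq_one {K : ℕ} (h : ‖scaledCoeff c K‖ = 1) :
    c K ≠ 0 ∧ padicValRat 2 (c K) = 2 - (log 2 K : ℤ) := by
  have hc : c K ≠ 0 := fun hc => by simp [scaledCoeff, hc] at h
  rw [norm_scaledCoeff_of_ne_zero hc, zpow_eq_one_iff_right₀ zero_le_two (by norm_num)] at h
  exact ⟨hc, by omega⟩

end Scaled

theorem valuation_of_thue_morse_fourier_general
    (c : ℕ → ℚ) (h1 : c 1 = -1/3)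
    (heven : ∀ n : ℕ, 1 ≤ n → c (2 * n) = c n)
    (hodd : ∀ n : ℕ, 1 ≤ n → c (2 * n + 1) = -(c n + c (n + 1)) / 2)
    (l : ℕ → ℕ) (hl1 : l 1 = 0)
    (hlrec : ∀ K : ℕ, Odd K → 3 ≤ K →
      l K = padicValNat 2 (K - 1) + l ((K - 1) / 2 ^ padicValNat 2 (K - 1))) :
    (∀ K : ℕ, Odd K → 5 ≤ K → c K = 0 ∨ 2 - (l K : ℤ) ≤ padicValRat 2 (c K)) ∧
    (∀ K : ℕ, Odd K → 9 ≤ K → c K ≠ 0 ∧ padicValRat 2 (c K) = 2 - (l K : ℤ)) := by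
  refine ⟨fun K hK h5 => ?_, fun K hK h9 => ?_⟩
  · have hL : 2 ^ 2 ≤ (2 : ℝ) ^ log 2 K :=
      pow_le_pow_right₀ one_le_two (Nat.le_log_of_pow_le one_lt_two (by omega))
    rw [eq_log_two_of_rec hl1 hlrec hK]
    refine padicValRat_of_norm_scaledCoeff_le_one
      ((norm_scaled_of_odd h1 heven hodd hK).2.1.trans (max_le le_rfl ?_))
    rw [div_le_one (by positivity)]
    linarith
  · rw [eq_log_two_of_rec hl1 hlrec hK]
    exact padicValRat_of_norm_scaledCoeff_eq_one
      ((norm_scaled_of_odd h1 heven hodd hK).2.2 (Nat.le_log_of_pow_le one_lt_two (by omega)))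

/-- Let `c : ℕ → ℚ` be the Thue–Morse Fourier coefficient sequence
(`c(0)=1`, `c(1)=−1/3`, `c(2n)=c(n)` and `c(2n+1)=−(c(n)+c(n+1))/2` for `n ≥ 1`), and
let `l` be defined by `l(1)=0` and `l(K) = v₂(K−1) + l((K−1)/2^{v₂(K−1)})` for odd
`K ≥ 3`. Then for every odd `K ≥ 5`, either `c(K) = 0` or `v₂(c(K)) ≥ 2 − l(K)`;
moreover, for every odd `K ≥ 9`, `c(K) ≠ 0` and `v₂(c(K)) = 2 − l(K)`. -/
theorem valuation_of_thue_morse_fourier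
    (c : ℕ → ℚ) (h0 : c 0 = 1) (h1 : c 1 = -1/3)
    (heven : ∀ n : ℕ, 1 ≤ n → c (2 * n) = c n)
    (hodd : ∀ n : ℕ, 1 ≤ n → c (2 * n + 1) = -(c n + c (n + 1)) / 2)
    (l : ℕ → ℕ) (hl1 : l 1 = 0)
    (hlrec : ∀ K : ℕ, Odd K → 3 ≤ K →
      l K = padicValNat 2 (K - 1) + l ((K - 1) / 2 ^ padicValNat 2 (K - 1))) :
    (∀ K : ℕ, Odd K → 5 ≤ K → c K = 0 ∨ 2 - (l K : ℤ) ≤ padicValRat 2 (c K)) ∧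
    (∀ K : ℕ, Odd K → 9 ≤ K → c K ≠ 0 ∧ padicValRat 2 (c K) = 2 - (l K : ℤ)) :=
  valuation_of_thue_morse_fourier_general c h1 heven hodd l hl1 hlrec
end

section
/- Let c : ℕ → ℚ be defined by c(0) = 1, c(1) = −1/3, c(2n) = c(n) for n ≥ 1, and c(2n+1) = −(c(n) + c(n+1))/2 for n ≥ 1. If K, L ≥ 9 are odd natural numbers with c(K) = c(L), then l(K) = l(L). -/
/-! Both sides are read off the length of the binary expansion. Unwinding the recursion, `l K`
is the binary logarithm `⌊log₂ K⌋`. On the other side, an induction along the binary digits shows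
that on the dyadic block `2 ^ (e + 2) ≤ m < 2 ^ (e + 3)` the values `c m` and `c (m + 1)` are
integers divided by `3 · 2 ^ e` whose numerators differ by an odd number; hence for odd `M ≥ 9`
the numerator of `c M = -(c m + c (m + 1)) / 2` is odd, so the `2`-adic valuation of `c M` is
`2 - ⌊log₂ M⌋`, and `c K = c L` forces `⌊log₂ K⌋ = ⌊log₂ L⌋`. -/

lemma Nat.log_two_of_div_two_eq {n m : ℕ} (hm : m ≠ 0) (h : n / 2 = m) :
    Nat.log 2 n = Nat.log 2 m + 1 := by
  rw [Nat.log_of_one_lt_of_le one_lt_two (by omega), h]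

theorem eq_log_two_of_odd (l : ℕ → ℕ) (hl1 : l 1 = 0)
    (hlrec : ∀ K : ℕ, Odd K → 3 ≤ K →
      l K = padicValNat 2 (K - 1) + l ((K - 1) / 2 ^ padicValNat 2 (K - 1)))
    {K : ℕ} (hK : Odd K) : l K = Nat.log 2 K := by
  induction K using Nat.strong_induction_on with
  | _ K ih =>
  obtain ⟨k, rfl⟩ := hK
  rcases Nat.eq_zero_or_pos k with rfl | hk
  · simpa using hl1
  rw [hlrec _ ⟨k, rfl⟩ (by omega), Nat.add_sub_cancel]
  have hodd_part : Odd (2 * k / 2 ^ padicValNat 2 (2 * k)) := by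
    rw [Nat.odd_iff, ← Nat.two_dvd_ne_zero, ← Nat.factorization_def _ Nat.prime_two]
    exact Nat.not_dvd_ordCompl Nat.prime_two (by omega)
  have hlt : 2 * k / 2 ^ padicValNat 2 (2 * k) < 2 * k + 1 :=
    (Nat.div_le_self _ _).trans_lt (Nat.lt_succ_self _)
  have hlog : Nat.log 2 (2 * k + 1) = Nat.log 2 (2 * k) := by
    rw [Nat.log_two_of_div_two_eq (n := 2 * k + 1) hk.ne' (by omega),
      Nat.log_two_of_div_two_eq (n := 2 * k) hk.ne' (by omega)]
  rw [ih _ hlt hodd_part, Nat.log_div_base_pow, hlog]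
  have := padicValNat_le_nat_log (p := 2) (2 * k)
  omega

theorem padicValRat_two_eq_neg_of_mul_two_pow_eq {q : ℚ} {x y : ℤ} (hx : Odd x) (hy : Odd y)
    {n : ℕ} (h : y * 2 ^ n * q = x) : padicValRat 2 q = -n := by
  have hne_zero : ∀ {z : ℤ}, Odd z → (z : ℚ) ≠ 0 := fun hz =>
    Int.cast_ne_zero.mpr (by rintro rfl; simp at hz)
  have hval_odd : ∀ {z : ℤ}, Odd z → padicValRat 2 z = 0 := fun hz => by
    rw [padicValRat.of_int, padicValInt.eq_zero_of_not_dvd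
      (by rw [Nat.cast_ofNat, ← even_iff_two_dvd, Int.not_even_iff_odd]; exact hz)]
    rfl
  have hq : q ≠ 0 := by
    rintro rfl
    exact hne_zero hx (by simpa using h.symm)
  have hpow : (2 : ℚ) ^ n ≠ 0 := pow_ne_zero _ two_ne_zero
  have := congrArg (padicValRat 2) h
  rw [padicValRat.mul (mul_ne_zero (hne_zero hy) hpow) hq, padicValRat.mul (hne_zero hy) hpow,
    padicValRat.pow, hval_odd hy, hval_odd hx] at this
  have h2 : padicValRat 2 2 = 1 := padicValRat.self (p := 2) one_lt_two
  rw [h2] at this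
  linarith

theorem exists_int_scaled_coeff_odd_sub (c : ℕ → ℚ) (h1 : c 1 = -1/3)
    (heven : ∀ n : ℕ, 1 ≤ n → c (2 * n) = c n)
    (hodd : ∀ n : ℕ, 1 ≤ n → c (2 * n + 1) = -(c n + c (n + 1)) / 2)
    {m : ℕ} (hm : 4 ≤ m) :
    ∃ a b : ℤ, Odd (a - b) ∧ 3 * 2 ^ (Nat.log 2 m - 2) * c m = a ∧
      3 * 2 ^ (Nat.log 2 m - 2) * c (m + 1) = b := by
  induction m using Nat.strong_induction_on with
  | _ m ih =>
  by_cases hm8 : m < 8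
  · have c2 : c 2 = -1/3 := (heven 1 le_rfl).trans h1
    have c3 : c 3 = 1/3 := by rw [hodd 1 le_rfl, h1, c2]; norm_num
    have c4 : c 4 = -1/3 := (heven 2 (by norm_num)).trans c2
    have c5 : c 5 = 0 := by rw [hodd 2 (by norm_num), c2, c3]; norm_num
    have c6 : c 6 = 1/3 := (heven 3 (by norm_num)).trans c3
    have c7 : c 7 = 0 := by rw [hodd 3 (by norm_num), c3, c4]; norm_num
    have c8 : c 8 = -1/3 := (heven 4 (by norm_num)).trans c4
    interval_cases m
    · exact ⟨-1, 0, by decide, by norm_num [c4, c5]⟩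
    · exact ⟨0, 1, by decide, by norm_num [c5, c6]⟩
    · exact ⟨1, 0, by decide, by norm_num [c6, c7]⟩
    · exact ⟨0, -1, by decide, by norm_num [c7, c8]⟩
  obtain ⟨m', hm' | hm'⟩ := Nat.even_or_odd' m
  all_goals
    obtain ⟨a, b, hab, ha, hb⟩ := ih m' (by omega) (by omega)
    have hlog : Nat.log 2 m - 2 = Nat.log 2 m' - 2 + 1 := by
      have := Nat.le_log_of_pow_le one_lt_two (show 2 ^ 2 ≤ m' by omega)
      rw [Nat.log_two_of_div_two_eq (by omega) (show m / 2 = m' by omega)]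
      omega
    subst hm'
    rw [hlog, pow_succ]
  · refine ⟨2 * a, -(a + b), ?_, ?_, ?_⟩
    · rw [show 2 * a - -(a + b) = a - b + 2 * (a + b) by ring]
      exact hab.add_even (even_two_mul _)
    · rw [heven m' (by omega)]; push_cast; linear_combination 2 * ha
    · rw [hodd m' (by omega)]; push_cast; linear_combination -ha - hb
  · refine ⟨-(a + b), 2 * b, ?_, ?_, ?_⟩
    · rw [show -(a + b) - 2 * b = a - b - 2 * (a + b) by ring]
      exact hab.sub_even (even_two_mul _)
    · rw [hodd m' (by omega)]; push_cast; linear_combination -ha - hb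
    · rw [show 2 * m' + 1 + 1 = 2 * (m' + 1) by ring, heven (m' + 1) (by omega)]
      push_cast; linear_combination 2 * hb

theorem padicValRat_two_coeff_of_odd (c : ℕ → ℚ) (h1 : c 1 = -1/3)
    (heven : ∀ n : ℕ, 1 ≤ n → c (2 * n) = c n)
    (hodd : ∀ n : ℕ, 1 ≤ n → c (2 * n + 1) = -(c n + c (n + 1)) / 2)
    {M : ℕ} (hM : Odd M) (hM9 : 9 ≤ M) : padicValRat 2 (c M) = 2 - Nat.log 2 M := by
  obtain ⟨m, rfl⟩ := hM
  obtain ⟨a, b, hab, ha, hb⟩ := exists_int_scaled_coeff_odd_sub c h1 heven hodd (m := m) (by omega)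
  have hlog_m : 2 ≤ Nat.log 2 m := Nat.le_log_of_pow_le one_lt_two (show 2 ^ 2 ≤ m by omega)
  have hnum_odd : Odd (-(a + b)) := by
    rw [show -(a + b) = -(a - b) - 2 * b by ring]
    exact hab.neg.sub_even (even_two_mul _)
  have hscaled : (3 : ℤ) * 2 ^ (Nat.log 2 m - 1) * c (2 * m + 1) = (-(a + b) : ℤ) := by
    rw [show Nat.log 2 m - 1 = Nat.log 2 m - 2 + 1 by omega, pow_succ, hodd m (by omega)]
    push_cast
    linear_combination -ha - hb
  rw [padicValRat_two_eq_neg_of_mul_two_pow_eq hnum_odd (by decide) hscaled,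
    Nat.log_two_of_div_two_eq (n := 2 * m + 1) (m := m) (by omega) (by omega)]
  omega

theorem tm_equivalent_implies_same_l_general
    (c : ℕ → ℚ) (h1 : c 1 = -1/3)
    (heven : ∀ n : ℕ, 1 ≤ n → c (2 * n) = c n)
    (hodd : ∀ n : ℕ, 1 ≤ n → c (2 * n + 1) = -(c n + c (n + 1)) / 2)
    (l : ℕ → ℕ) (hl1 : l 1 = 0)
    (hlrec : ∀ K : ℕ, Odd K → 3 ≤ K →
      l K = padicValNat 2 (K - 1) + l ((K - 1) / 2 ^ padicValNat 2 (K - 1)))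
    (K L : ℕ) (hK : Odd K) (hL : Odd L) (hK9 : 9 ≤ K) (hL9 : 9 ≤ L)
    (hcKL : c K = c L) :
    l K = l L := by
  have hval := congrArg (padicValRat 2) hcKL
  rw [padicValRat_two_coeff_of_odd c h1 heven hodd hK hK9,
    padicValRat_two_coeff_of_odd c h1 heven hodd hL hL9] at hval
  rw [eq_log_two_of_odd l hl1 hlrec hK, eq_log_two_of_odd l hl1 hlrec hL]
  omega

/-- Let `c : ℕ → ℚ` be the Thue–Morse Fourier coefficient sequence and `l`
the function `l(1)=0`, `l(K) = v₂(K−1) + l((K−1)/2^{v₂(K−1)})` for odd `K ≥ 3`.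
If `K, L ≥ 9` are odd and `c(K) = c(L)`, then `l(K) = l(L)`. -/
theorem tm_equivalent_implies_same_l
    (c : ℕ → ℚ) (h0 : c 0 = 1) (h1 : c 1 = -1/3)
    (heven : ∀ n : ℕ, 1 ≤ n → c (2 * n) = c n)
    (hodd : ∀ n : ℕ, 1 ≤ n → c (2 * n + 1) = -(c n + c (n + 1)) / 2)
    (l : ℕ → ℕ) (hl1 : l 1 = 0)
    (hlrec : ∀ K : ℕ, Odd K → 3 ≤ K →
      l K = padicValNat 2 (K - 1) + l ((K - 1) / 2 ^ padicValNat 2 (K - 1)))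
    (K L : ℕ) (hK : Odd K) (hL : Odd L) (hK9 : 9 ≤ K) (hL9 : 9 ≤ L)
    (hcKL : c K = c L) :
    l K = l L :=
  tm_equivalent_implies_same_l_general c h1 heven hodd l hl1 hlrec K L hK hL hK9 hL9 hcKL
end

section
/- Let (a_n)_{n≥1} be an increasing sequence of positive integers with a_n | a_{n+1} and ρ := Σ_{n=1}^{∞} 1/a_n ≤ 1/4. Define sets A_n ⊆ ℕ (for n ∈ ℕ, including 0) recursively: A_0 = {k·a_1 : k ∈ ℕ}; for n > 0, if n ∈ A_m for some m < n then A_n := A_m (this is well defined: any two distinct sets among A_0,…,A_{n−1} are disjoint), and otherwise A_n := {n + k·a_{n+1} : k ∈ ℕ}. Define z : ℕ → ℤ by z(n) = μ(min A_n). Then liminf_{N→∞} (1/N) Σ_{k=1}^{N} z(k)·μ(k) ≥ 6/π² − 2ρ, and 6/π² − 2ρ > 0. -/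
/-!
Write C_N for the set of k ≤ N lying in a progression m + t·a_{m+1} (t ≥ 1) with m < k. Each such
progression contributes at most N / a_{m+1} points, so #C_N ≤ Nρ (ρ is finite since
a_{n+1} ≥ 2 a_n). If k ∉ C_N then k lies in no earlier set A_m (otherwise, for the least such m,
m is the initial of A_m and k is in its progression), so min A_k = k and z(k)μ(k) = μ(k)²; on C_N
we only use z(k)μ(k) ≥ μ(k)² − 2. Thus the averages of zμ are at least those of μ² minus 2ρ. The
mean of μ² is Σ μ(d)/d² = 1/ζ(2) = 6/π², by μ(n)² = Σ_{d² ∣ n} μ(d) and dominated convergence,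
and 6/π² > 1/2 ≥ 2ρ.
-/

open ArithmeticFunction Finset Filter
open scoped ArithmeticFunction.Moebius ArithmeticFunction.zeta Topology

theorem abs_moebius_cast_le_one (n : ℕ) : |(μ n : ℝ)| ≤ 1 := by
  exact_mod_cast abs_moebius_le_one

theorem Nat.sq_dvd_sq_mul_iff_dvd {d b c : ℕ} (hc : Squarefree c) :
    d ^ 2 ∣ b ^ 2 * c ↔ d ∣ b := by
  refine ⟨fun h => ?_, fun h => dvd_mul_of_dvd_left (pow_dvd_pow_of_dvd h 2) c⟩
  rcases eq_or_ne b 0 with rfl | hb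
  · exact dvd_zero d
  have hd : d ≠ 0 := by rintro rfl; simp [hb, hc.ne_zero] at h
  rw [← Nat.factorization_le_iff_dvd hd hb]
  intro p
  have hp := (Nat.factorization_le_iff_dvd (by positivity) (by simp [hb, hc.ne_zero])).2 h p
  simp only [Nat.factorization_pow, Nat.factorization_mul (pow_ne_zero 2 hb) hc.ne_zero,
    Finsupp.coe_smul, Finsupp.coe_add, Pi.smul_apply, Pi.add_apply, smul_eq_mul] at hp
  have := hc.natFactorization_le_one p
  omega

theorem sum_moebius_filter_sq_dvd {n : ℕ} (hn : n ≠ 0) :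
    ∑ d ∈ n.divisors with d ^ 2 ∣ n, (μ d : ℤ) = μ n ^ 2 := by
  obtain ⟨c, b, rfl, hc⟩ := Nat.sq_mul_squarefree n
  have hb : b ≠ 0 := by rintro rfl; simp at hn
  have hdiv : {d ∈ (b ^ 2 * c).divisors | d ^ 2 ∣ b ^ 2 * c} = b.divisors := by
    ext d
    simp only [mem_filter, Nat.mem_divisors, Nat.sq_dvd_sq_mul_iff_dvd hc]
    exact ⟨fun h => ⟨h.2, hb⟩,
      fun h => ⟨⟨dvd_mul_of_dvd_left (dvd_pow h.1 two_ne_zero) c, hn⟩, h.1⟩⟩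
  have hsq : Squarefree (b ^ 2 * c) ↔ b = 1 :=
    ⟨fun h => Nat.isUnit_iff.1 (h b ⟨c, by ring⟩), by rintro rfl; simpa using hc⟩
  rw [hdiv, ← coe_mul_zeta_apply, moebius_mul_coe_zeta, one_apply, moebius_sq]
  simp only [hsq]

theorem sum_Icc_moebius_sq (N : ℕ) :
    ∑ k ∈ Icc 1 N, (μ k : ℤ) ^ 2 = ∑ d ∈ Icc 1 N, μ d * (N / d ^ 2 : ℕ) := by
  have hswap : ∑ k ∈ Icc 1 N, ∑ d ∈ k.divisors with d ^ 2 ∣ k, (μ d : ℤ)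
      = ∑ d ∈ Icc 1 N, ∑ k ∈ Icc 1 N with d ^ 2 ∣ k, (μ d : ℤ) := by
    refine sum_comm' fun k d => ?_
    simp only [mem_Icc, mem_filter, Nat.mem_divisors]
    constructor
    · rintro ⟨⟨hk1, hkN⟩, ⟨hdk, -⟩, hsq⟩
      have := Nat.le_of_dvd hk1 hdk
      exact ⟨⟨⟨hk1, hkN⟩, hsq⟩, Nat.pos_of_dvd_of_pos hdk hk1, by omega⟩
    · rintro ⟨⟨⟨hk1, hkN⟩, hsq⟩, -⟩
      exact ⟨⟨hk1, hkN⟩, ⟨(dvd_pow_self d two_ne_zero).trans hsq, by omega⟩, hsq⟩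
  rw [← sum_congr rfl fun k hk => sum_moebius_filter_sq_dvd (n := k) (by simp at hk; omega),
    hswap]
  refine sum_congr rfl fun d _ => ?_
  rw [sum_const, show Icc 1 N = Ioc 0 N from Icc_add_one_left_eq_Ioc 0 N,
    Nat.Ioc_filter_dvd_card_eq_div, nsmul_eq_mul, mul_comm]

theorem tendsto_nat_div_div_atTop {q : ℕ} (hq : q ≠ 0) :
    Tendsto (fun N : ℕ => ((N / q : ℕ) : ℝ) / N) atTop (𝓝 (1 / q)) := by
  have hqR : (0 : ℝ) < q := by positivity
  have hx : Tendsto (fun N : ℕ => (N : ℝ) / q) atTop atTop :=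
    tendsto_natCast_atTop_atTop.atTop_div_const hqR
  have := (tendsto_nat_floor_div_atTop.comp hx).mul_const (1 / (q : ℝ))
  rw [one_mul] at this
  refine this.congr' ?_
  filter_upwards [eventually_ne_atTop 0] with N hN
  rw [Function.comp_apply, Nat.floor_div_eq_div]
  field_simp

theorem summable_moebius_div_sq : Summable fun d : ℕ => (μ d : ℝ) / d ^ 2 :=
  (Real.summable_one_div_nat_pow.2 one_lt_two).of_norm_bounded fun d => by
    rw [norm_div, norm_pow, Real.norm_natCast, Real.norm_eq_abs]
    exact div_le_div_of_nonneg_right (abs_moebius_cast_le_one d) (by positivity)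

theorem tsum_moebius_div_sq : ∑' d : ℕ, (μ d : ℝ) / d ^ 2 = 6 / Real.pi ^ 2 := by
  have h2 : (1 : ℝ) < (2 : ℂ).re := by norm_num
  have hL := LSeries_one_mul_Lseries_moebius h2
  rw [LSeries_one_eq_riemannZeta h2, riemannZeta_two] at hL
  have hμ : LSeries (fun n => ((μ n : ℤ) : ℂ)) 2 = ((∑' d : ℕ, (μ d : ℝ) / d ^ 2 : ℝ) : ℂ) := by
    rw [LSeries, Complex.ofReal_tsum]
    refine tsum_congr fun n => ?_
    rcases eq_or_ne n 0 with rfl | hn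
    · simp
    · rw [LSeries.term_of_ne_zero hn, ← Nat.cast_ofNat, Complex.cpow_natCast]
      push_cast
      rfl
  rw [hμ] at hL
  have hπ : (Real.pi : ℂ) ^ 2 ≠ 0 := by exact_mod_cast pow_ne_zero 2 Real.pi_ne_zero
  have h6 : ((∑' d : ℕ, (μ d : ℝ) / d ^ 2 : ℝ) : ℂ) = 6 / (Real.pi : ℂ) ^ 2 := by
    rw [eq_div_iff hπ]
    linear_combination 6 * hL
  exact_mod_cast h6

theorem tendsto_average_moebius_sq :
    Tendsto (fun N : ℕ => (N : ℝ)⁻¹ * ∑ k ∈ Icc 1 N, (μ k : ℝ) ^ 2) atTop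
      (𝓝 (6 / Real.pi ^ 2)) := by
  have hsum (N : ℕ) : (N : ℝ)⁻¹ * ∑ k ∈ Icc 1 N, (μ k : ℝ) ^ 2
      = ∑' d : ℕ, (μ d : ℝ) * (((N / d ^ 2 : ℕ) : ℝ) / N) := by
    have := congrArg (fun x : ℤ => (N : ℝ)⁻¹ * x) (sum_Icc_moebius_sq N)
    simp only [Int.cast_sum, Int.cast_mul, Int.cast_pow, Int.cast_natCast] at this
    rw [this, tsum_eq_sum (s := Icc 1 N), mul_sum]
    · exact sum_congr rfl fun d _ => by ring
    · intro d hd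
      rcases Nat.eq_zero_or_pos d with rfl | hd0
      · simp
      · rw [Nat.div_eq_of_lt (by simp at hd; nlinarith [hd hd0])]
        simp
  simp only [hsum]
  rw [← tsum_moebius_div_sq]
  refine tendsto_tsum_of_dominated_convergence (bound := fun d => 1 / (d : ℝ) ^ 2)
    (Real.summable_one_div_nat_pow.2 one_lt_two) (fun d => ?_) (Eventually.of_forall fun N d => ?_)
  · rcases eq_or_ne d 0 with rfl | hd
    · simp
    · convert (tendsto_nat_div_div_atTop (pow_ne_zero 2 hd)).const_mul (μ d : ℝ) using 2
      push_cast
      ring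
  · have hq : ((N / d ^ 2 : ℕ) : ℝ) / N ≤ 1 / (d : ℝ) ^ 2 := by
      rcases eq_or_ne N 0 with rfl | hN
      · simp
      · calc ((N / d ^ 2 : ℕ) : ℝ) / N ≤ ((N : ℝ) / (d ^ 2 : ℕ)) / N := by
              gcongr; exact Nat.cast_div_le
          _ = 1 / (d : ℝ) ^ 2 := by field_simp; push_cast; ring
    rw [norm_mul, Real.norm_eq_abs, Real.norm_of_nonneg (by positivity)]
    simpa using mul_le_mul (abs_moebius_cast_le_one d) hq (by positivity) zero_le_one

theorem one_half_lt_six_div_pi_sq : 1 / 2 < 6 / Real.pi ^ 2 := by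
  have := Real.pi_lt_d2
  rw [div_lt_div_iff₀ two_pos (by positivity)]
  nlinarith [Real.pi_pos]

theorem two_pow_le_of_dvd_of_lt {b : ℕ → ℕ} (hdvd : ∀ n, b n ∣ b (n + 1))
    (hlt : ∀ n, b n < b (n + 1)) (n : ℕ) : 2 ^ n ≤ b n := by
  induction n with
  | zero =>
    refine Nat.one_le_iff_ne_zero.2 fun h0 => ?_
    have := hdvd 0
    have := hlt 0
    simp_all
  | succ n ih =>
    obtain ⟨c, hc⟩ := hdvd n
    have := hlt n
    have hc2 : 2 ≤ c := by
      rcases c with _ | _ | c <;> simp_all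
    calc 2 ^ (n + 1) = 2 * 2 ^ n := by ring
      _ ≤ c * b n := Nat.mul_le_mul hc2 ih
      _ = b (n + 1) := by rw [hc, mul_comm]

theorem summable_one_div_of_dvd_of_lt {b : ℕ → ℕ} (hdvd : ∀ n, b n ∣ b (n + 1))
    (hlt : ∀ n, b n < b (n + 1)) : Summable fun n => (1 : ℝ) / b n := by
  refine summable_geometric_two.of_nonneg_of_le (fun n => by positivity) fun n => ?_
  rw [div_pow, one_pow]
  have : (2 : ℝ) ^ n ≤ b n := by exact_mod_cast two_pow_le_of_dvd_of_lt hdvd hlt n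
  gcongr

theorem le_liminf_of_tendsto_of_eventually_le {α : Type*} {l : Filter α} [l.NeBot]
    {f g : α → ℝ} {c : ℝ} (hg : Tendsto g l (𝓝 c)) (hgf : ∀ᶠ x in l, g x ≤ f x)
    (hf : IsBoundedUnder (· ≤ ·) l f) : c ≤ liminf f l :=
  hg.liminf_eq ▸ liminf_le_liminf hgf hg.isBoundedUnder_ge hf.isCoboundedUnder_ge

theorem isBoundedUnder_le_average {f : ℕ → ℝ} (hf : ∀ k, |f k| ≤ 1) :
    IsBoundedUnder (· ≤ ·) atTop fun N : ℕ => (N : ℝ)⁻¹ * ∑ k ∈ Icc 1 N, f k := by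
  refine isBoundedUnder_of ⟨1, fun N => inv_mul_le_one_of_le₀ ?_ N.cast_nonneg⟩
  calc ∑ k ∈ Icc 1 N, f k ≤ ∑ k ∈ Icc 1 N, (1 : ℝ) :=
        sum_le_sum fun k _ => (le_abs_self _).trans (hf k)
    _ = N := by simp

theorem sq_sub_two_le_mul {x y : ℝ} (hx : |x| ≤ 1) (hy : |y| ≤ 1) : y ^ 2 - 2 ≤ x * y := by
  have hxy : |x * y| ≤ 1 := by rw [abs_mul]; exact mul_le_one₀ hx (abs_nonneg y) hy
  nlinarith [(sq_le_one_iff_abs_le_one y).2 hy, neg_abs_le (x * y)]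

def progressionCover (b : ℕ → ℕ) (N : ℕ) : Finset ℕ :=
  (range N).biUnion fun m => (Icc 1 (N / b m)).image fun t => m + t * b m

theorem mem_progressionCover {b : ℕ → ℕ} {N m k t : ℕ} (hm : m < k) (hkN : k ≤ N)
    (hk : k = m + t * b m) : k ∈ progressionCover b N := by
  have hpos : 0 < t * b m := by omega
  have ht : t * b m ≤ N := by omega
  refine mem_biUnion.2 ⟨m, mem_range.2 (by omega), mem_image.2 ⟨t, mem_Icc.2 ⟨?_, ?_⟩, hk.symm⟩⟩
  · exact Nat.pos_of_mul_pos_right hpos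
  · exact (Nat.le_div_iff_mul_le (Nat.pos_of_mul_pos_left hpos)).2 ht

theorem card_progressionCover_le {b : ℕ → ℕ} (hs : Summable fun m => (1 : ℝ) / b m) (N : ℕ) :
    (#(progressionCover b N) : ℝ) ≤ N * ∑' m, (1 : ℝ) / b m := by
  have hcard : #(progressionCover b N) ≤ ∑ m ∈ range N, N / b m :=
    card_biUnion_le.trans <| sum_le_sum fun m _ => card_image_le.trans (by simp)
  calc (#(progressionCover b N) : ℝ) ≤ ∑ m ∈ range N, ((N / b m : ℕ) : ℝ) := by
        exact_mod_cast hcard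
    _ ≤ ∑ m ∈ range N, (N : ℝ) * (1 / b m) :=
        sum_le_sum fun m _ => Nat.cast_div_le.trans_eq (mul_one_div _ _).symm
    _ ≤ N * ∑' m, (1 : ℝ) / b m := by
        rw [← mul_sum]
        exact mul_le_mul_of_nonneg_left (hs.sum_le_tsum _ fun m _ => by positivity) (by positivity)

structure IsToeplitzSystem (a : ℕ → ℕ) (A : ℕ → Set ℕ) : Prop where
  zero : A 0 = {j | ∃ k : ℕ, j = k * a 1}
  eq_of_mem : ∀ n : ℕ, 0 < n → ∀ m : ℕ, m < n → n ∈ A m → A n = A m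
  eq_of_forall_not_mem : ∀ n : ℕ, 0 < n → (∀ m : ℕ, m < n → n ∉ A m) →
    A n = {j | ∃ k : ℕ, j = n + k * a (n + 1)}

namespace IsToeplitzSystem

variable {a : ℕ → ℕ} {A : ℕ → Set ℕ}

theorem eq_progression (hA : IsToeplitzSystem a A) {n : ℕ} (hn : ∀ m < n, n ∉ A m) :
    A n = {j | ∃ k : ℕ, j = n + k * a (n + 1)} := by
  rcases Nat.eq_zero_or_pos n with rfl | hn0
  · simp [hA.zero]
  · exact hA.eq_of_forall_not_mem n hn0 hn

theorem sInf_eq (hA : IsToeplitzSystem a A) {n : ℕ} (hn : ∀ m < n, n ∉ A m) :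
    sInf (A n) = n := by
  rw [hA.eq_progression hn]
  refine le_antisymm (Nat.sInf_le ⟨0, by simp⟩) (le_csInf ⟨n, 0, by simp⟩ ?_)
  rintro _ ⟨k, rfl⟩
  exact Nat.le_add_right _ _

theorem exists_initial_of_mem (hA : IsToeplitzSystem a A) {m k : ℕ} (hm : m < k)
    (hk : k ∈ A m) : ∃ m₀ < k, (∀ m' < m₀, m₀ ∉ A m') ∧ k ∈ A m₀ := by
  induction m using Nat.strong_induction_on with
  | _ m ih =>
    by_cases hnew : ∀ m' < m, m ∉ A m'
    · exact ⟨m, hm, hnew, hk⟩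
    · push Not at hnew
      obtain ⟨m', hm', hmem⟩ := hnew
      exact ih m' hm' (hm'.trans hm) (hA.eq_of_mem m (by omega) m' hm' hmem ▸ hk)

theorem sInf_eq_of_not_mem_progression (hA : IsToeplitzSystem a A) {k : ℕ}
    (hk : ¬∃ m < k, ∃ t, k = m + t * a (m + 1)) : sInf (A k) = k := by
  refine hA.sInf_eq fun m hm hkm => hk ?_
  obtain ⟨m₀, hm₀, hnew, hk₀⟩ := hA.exists_initial_of_mem hm hkm
  rw [hA.eq_progression hnew] at hk₀
  exact ⟨m₀, hm₀, hk₀⟩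

theorem sum_moebius_sq_sub_le (hA : IsToeplitzSystem a A) (N : ℕ) :
    ∑ k ∈ Icc 1 N, (μ k : ℝ) ^ 2 - 2 * #(progressionCover (fun m => a (m + 1)) N)
      ≤ ∑ k ∈ Icc 1 N, (μ (sInf (A k)) : ℝ) * μ k := by
  set C := progressionCover (fun m => a (m + 1)) N
  have hpt : ∀ k ∈ Icc 1 N, (μ k : ℝ) ^ 2 - 2 * (if k ∈ C then 1 else 0)
      ≤ (μ (sInf (A k)) : ℝ) * μ k := by
    intro k hk
    split_ifs with hkC
    · simpa using sq_sub_two_le_mul (abs_moebius_cast_le_one _) (abs_moebius_cast_le_one k)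
    · have hnot : ¬∃ m < k, ∃ t, k = m + t * a (m + 1) := fun ⟨m, hm, t, ht⟩ =>
        hkC (mem_progressionCover hm (mem_Icc.1 hk).2 ht)
      rw [hA.sInf_eq_of_not_mem_progression hnot]
      simp [sq]
  have hC : ∑ k ∈ Icc 1 N, (if k ∈ C then (1 : ℝ) else 0) ≤ #C := by
    rw [sum_boole]
    exact_mod_cast card_le_card fun k hk => (mem_filter.1 hk).2
  calc ∑ k ∈ Icc 1 N, (μ k : ℝ) ^ 2 - 2 * #C
      ≤ ∑ k ∈ Icc 1 N, ((μ k : ℝ) ^ 2 - 2 * (if k ∈ C then 1 else 0)) := by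
        rw [sum_sub_distrib, ← mul_sum]; linarith
    _ ≤ _ := sum_le_sum hpt

theorem average_sub_le (hA : IsToeplitzSystem a A)
    (hs : Summable fun m => (1 : ℝ) / a (m + 1)) {N : ℕ} (hN : N ≠ 0) :
    (N : ℝ)⁻¹ * ∑ k ∈ Icc 1 N, (μ k : ℝ) ^ 2 - 2 * ∑' m, (1 : ℝ) / a (m + 1)
      ≤ (N : ℝ)⁻¹ * ∑ k ∈ Icc 1 N, (μ (sInf (A k)) : ℝ) * μ k := by
  have hC := card_progressionCover_le hs N
  have hNpos : (0 : ℝ) < N := by positivity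
  calc (N : ℝ)⁻¹ * ∑ k ∈ Icc 1 N, (μ k : ℝ) ^ 2 - 2 * ∑' m, (1 : ℝ) / a (m + 1)
      = (N : ℝ)⁻¹ * (∑ k ∈ Icc 1 N, (μ k : ℝ) ^ 2 - 2 * (N * ∑' m, (1 : ℝ) / a (m + 1))) := by
        field_simp
    _ ≤ (N : ℝ)⁻¹ * (∑ k ∈ Icc 1 N, (μ k : ℝ) ^ 2
          - 2 * #(progressionCover (fun m => a (m + 1)) N)) := by
        gcongr
    _ ≤ _ := by
        gcongr
        exact hA.sum_moebius_sq_sub_le N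

end IsToeplitzSystem

theorem nonregular_toeplitz_not_moebius_orthogonal_general
    (a : ℕ → ℕ)
    (hmono : ∀ n : ℕ, 1 ≤ n → a n < a (n + 1))
    (hdvd : ∀ n : ℕ, 1 ≤ n → a n ∣ a (n + 1))
    (ρ : ℝ) (hρ : ρ = ∑' n : ℕ, (1 : ℝ) / a (n + 1)) (hρ4 : ρ ≤ 1 / 4)
    (A : ℕ → Set ℕ)
    (hA0 : A 0 = {j | ∃ k : ℕ, j = k * a 1})
    (hAeq : ∀ n : ℕ, 0 < n → ∀ m : ℕ, m < n → n ∈ A m → A n = A m)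
    (hAnew : ∀ n : ℕ, 0 < n → (∀ m : ℕ, m < n → n ∉ A m) →
      A n = {j | ∃ k : ℕ, j = n + k * a (n + 1)}) :
    6 / Real.pi ^ 2 - 2 * ρ ≤
      liminf
        (fun N : ℕ => (N : ℝ)⁻¹ *
          ∑ k ∈ Finset.Icc 1 N,
            (ArithmeticFunction.moebius (sInf (A k)) : ℝ) *
              (ArithmeticFunction.moebius k : ℝ))
        atTop ∧
    0 < 6 / Real.pi ^ 2 - 2 * ρ := by
  have hA : IsToeplitzSystem a A := ⟨hA0, hAeq, hAnew⟩
  have hs : Summable fun m => (1 : ℝ) / a (m + 1) :=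
    summable_one_div_of_dvd_of_lt (b := fun m => a (m + 1)) (fun m => hdvd (m + 1) (by omega))
      (fun m => hmono (m + 1) (by omega))
  refine ⟨le_liminf_of_tendsto_of_eventually_le (tendsto_average_moebius_sq.sub_const (2 * ρ))
    ?_ (isBoundedUnder_le_average fun k => ?_), by linarith [one_half_lt_six_div_pi_sq]⟩
  · filter_upwards [eventually_ne_atTop 0] with N hN
    exact hρ ▸ hA.average_sub_le hs hN
  · rw [abs_mul]
    exact mul_le_one₀ (abs_moebius_cast_le_one _) (abs_nonneg _) (abs_moebius_cast_le_one k)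

/-- Let `(a_n)_{n≥1}` be increasing positive integers with `a_n ∣ a_{n+1}`
and `ρ = Σ_{n≥1} 1/a_n ≤ 1/4`. Let `A : ℕ → Set ℕ` be the sets from the non-regular
Toeplitz construction: `A 0 = {k·a₁}`; for `n > 0`, `A n = A m` whenever `m < n` and
`n ∈ A m`, and `A n = {n + k·a_{n+1}}` when `n ∉ A m` for all `m < n`. With
`z(n) = μ(min A_n)`, we have
`liminf_N (1/N) Σ_{k=1}^N z(k) μ(k) ≥ 6/π² − 2ρ > 0`. -/
theorem nonregular_toeplitz_not_moebius_orthogonal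
    (a : ℕ → ℕ)
    (hpos : ∀ n : ℕ, 1 ≤ n → 0 < a n)
    (hmono : ∀ n : ℕ, 1 ≤ n → a n < a (n + 1))
    (hdvd : ∀ n : ℕ, 1 ≤ n → a n ∣ a (n + 1))
    (ρ : ℝ) (hρ : ρ = ∑' n : ℕ, (1 : ℝ) / a (n + 1)) (hρ4 : ρ ≤ 1 / 4)
    (A : ℕ → Set ℕ)
    (hA0 : A 0 = {j | ∃ k : ℕ, j = k * a 1})
    (hAeq : ∀ n : ℕ, 0 < n → ∀ m : ℕ, m < n → n ∈ A m → A n = A m)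
    (hAnew : ∀ n : ℕ, 0 < n → (∀ m : ℕ, m < n → n ∉ A m) →
      A n = {j | ∃ k : ℕ, j = n + k * a (n + 1)}) :
    6 / Real.pi ^ 2 - 2 * ρ ≤
      liminf
        (fun N : ℕ => (N : ℝ)⁻¹ *
          ∑ k ∈ Finset.Icc 1 N,
            (ArithmeticFunction.moebius (sInf (A k)) : ℝ) *
              (ArithmeticFunction.moebius k : ℝ))
        atTop ∧
    0 < 6 / Real.pi ^ 2 - 2 * ρ :=
  nonregular_toeplitz_not_moebius_orthogonal_general a hmono hdvd ρ hρ hρ4 A hA0 hAeq hAnew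
end
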